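/- arXiv:1002.3065 — 8 statements merged into one kernel-verified Lean document; each statement's English description precedes it below -/
import Mathlib

section
/- Let g : [0,1] → ℝ be a C² function such that |g′(z)| ≥ c₁ > 0 for all z ∈ [0,1], and such that g″ changes sign at most twice on [0,1]: there exist 0 ≤ z₋ ≤ z₊ ≤ 1 with either (g″ ≥ 0 on [z₋, z₊] and g″ ≤ 0 on [0, z₋] ∪ [z₊, 1]) or the same with the inequalities reversed. Let G : [0,1] → ℝ be a C¹ function such that |G(z)| ≥ c₂ > 0 for all z ∈ [0,1], and such that G′ changes sign at most twice on [0,1] (in the same sense). Then | ∫₀¹ e^{2πi g(z)} / G(z) dz | ≤ 14/(π c₁ c₂). -/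
/-! Since `(e^{2πi g})' = 2πi g' e^{2πi g}`, integrating by parts with the amplitude
`ψ = 1/(g' G)` bounds the integral by `(|ψ 0| + |ψ 1| + ∫ |ψ'|) / 2π`. Here `|ψ| ≤ 1/(c₁ c₂)`
and `ψ' = (1/g')' · (1/G) + (1/g') · (1/G)'`. The derivatives `(1/g')' = -g''/g'²` and
`(1/G)' = -G'/G²` change sign at most twice, so `1/g'` and `1/G` are monotone on three pieces
and their total variations are at most `6/c₁` and `6/c₂`. This gives the bound `7/(π c₁ c₂)`. -/

open Real Set

/-- `f` changes sign at most twice on `[0,1]`: there are `0 ≤ z₋ ≤ z₊ ≤ 1` such that either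
`f ≥ 0` on `[z₋, z₊]` and `f ≤ 0` on `[0, z₋] ∪ [z₊, 1]`, or the same with inequalities
reversed. -/
def ChangesSignAtMostTwice (f : ℝ → ℝ) : Prop :=
  ∃ zm zp : ℝ, 0 ≤ zm ∧ zm ≤ zp ∧ zp ≤ 1 ∧
    (((∀ z ∈ Set.Icc zm zp, 0 ≤ f z) ∧
        (∀ z ∈ Set.Icc (0:ℝ) zm ∪ Set.Icc zp 1, f z ≤ 0)) ∨
      ((∀ z ∈ Set.Icc zm zp, f z ≤ 0) ∧
        (∀ z ∈ Set.Icc (0:ℝ) zm ∪ Set.Icc zp 1, 0 ≤ f z)))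

theorem ChangesSignAtMostTwice.neg {f : ℝ → ℝ} (hf : ChangesSignAtMostTwice f) :
    ChangesSignAtMostTwice fun z => -f z := by
  obtain ⟨zm, zp, h0m, hmp, hp1, ⟨hmid, hout⟩ | ⟨hmid, hout⟩⟩ := hf
  · exact ⟨zm, zp, h0m, hmp, hp1, Or.inr
      ⟨fun z hz => neg_nonpos.2 (hmid z hz), fun z hz => neg_nonneg.2 (hout z hz)⟩⟩
  · exact ⟨zm, zp, h0m, hmp, hp1, Or.inl
      ⟨fun z hz => neg_nonneg.2 (hmid z hz), fun z hz => neg_nonpos.2 (hout z hz)⟩⟩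

theorem ChangesSignAtMostTwice.div_nonneg {f h : ℝ → ℝ} (hf : ChangesSignAtMostTwice f)
    (hh : ∀ z, 0 ≤ h z) : ChangesSignAtMostTwice fun z => f z / h z := by
  obtain ⟨zm, zp, h0m, hmp, hp1, ⟨hmid, hout⟩ | ⟨hmid, hout⟩⟩ := hf
  · exact ⟨zm, zp, h0m, hmp, hp1, Or.inl
      ⟨fun z hz => _root_.div_nonneg (hmid z hz) (hh z),
        fun z hz => div_nonpos_of_nonpos_of_nonneg (hout z hz) (hh z)⟩⟩
  · exact ⟨zm, zp, h0m, hmp, hp1, Or.inr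
      ⟨fun z hz => div_nonpos_of_nonpos_of_nonneg (hmid z hz) (hh z),
        fun z hz => _root_.div_nonneg (hout z hz) (hh z)⟩⟩

theorem integral_eq_sub_of_hasDerivWithinAt_Icc {E : Type*} [NormedAddCommGroup E]
    [NormedSpace ℝ E] [CompleteSpace E] {f f' : ℝ → E} {a b : ℝ} (hab : a ≤ b)
    (hf : ∀ x ∈ Icc a b, HasDerivWithinAt f (f' x) (Icc a b) x)
    (hf' : ContinuousOn f' (Icc a b)) :
    ∫ x in a..b, f' x = f b - f a :=
  intervalIntegral.integral_eq_sub_of_hasDeriv_right_of_le hab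
    (fun x hx => (hf x hx).continuousWithinAt)
    (fun x hx => ((hf x (Ioo_subset_Icc_self hx)).hasDerivAt
      (Icc_mem_nhds hx.1 hx.2)).hasDerivWithinAt)
    (hf'.intervalIntegrable_of_Icc hab)

theorem integral_abs_deriv_eq_of_sign_const {p p' : ℝ → ℝ} {a b : ℝ} (hab : a ≤ b)
    (hp : ∀ x ∈ Icc a b, HasDerivWithinAt p (p' x) (Icc a b) x)
    (hp' : ContinuousOn p' (Icc a b))
    (hsign : (∀ x ∈ Icc a b, 0 ≤ p' x) ∨ (∀ x ∈ Icc a b, p' x ≤ 0)) :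
    ∫ x in a..b, |p' x| = |p b - p a| := by
  have hftc := integral_eq_sub_of_hasDerivWithinAt_Icc hab hp hp'
  rcases hsign with hnonneg | hnonpos
  · have habs : ∫ x in a..b, |p' x| = ∫ x in a..b, p' x :=
      intervalIntegral.integral_congr fun x hx => abs_of_nonneg (hnonneg x (uIcc_of_le hab ▸ hx))
    rw [habs, ← hftc, abs_of_nonneg (intervalIntegral.integral_nonneg hab hnonneg)]
  · have habs : ∫ x in a..b, |p' x| = ∫ x in a..b, -p' x :=
      intervalIntegral.integral_congr fun x hx => abs_of_nonpos (hnonpos x (uIcc_of_le hab ▸ hx))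
    have hneg : 0 ≤ ∫ x in a..b, -p' x :=
      intervalIntegral.integral_nonneg hab fun x hx => neg_nonneg.2 (hnonpos x hx)
    rw [intervalIntegral.integral_neg, neg_nonneg] at hneg
    rw [habs, intervalIntegral.integral_neg, ← hftc, abs_of_nonpos hneg]

theorem integral_abs_deriv_le_of_changesSignAtMostTwice {p p' : ℝ → ℝ} {M : ℝ}
    (hp : ∀ x ∈ Icc (0:ℝ) 1, HasDerivWithinAt p (p' x) (Icc 0 1) x)
    (hp' : ContinuousOn p' (Icc 0 1)) (hM : ∀ x ∈ Icc (0:ℝ) 1, |p x| ≤ M)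
    (hsign : ChangesSignAtMostTwice p') :
    ∫ x in (0:ℝ)..1, |p' x| ≤ 6 * M := by
  have piece : ∀ a b, 0 ≤ a → a ≤ b → b ≤ 1 →
      ((∀ x ∈ Icc a b, 0 ≤ p' x) ∨ (∀ x ∈ Icc a b, p' x ≤ 0)) → ∫ x in a..b, |p' x| ≤ 2 * M := by
    intro a b h0a hab hb1 hab_sign
    have hsub : Icc a b ⊆ Icc 0 1 := Icc_subset_Icc h0a hb1
    rw [integral_abs_deriv_eq_of_sign_const hab (fun x hx => (hp x (hsub hx)).mono hsub)
      (hp'.mono hsub) hab_sign]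
    linarith [abs_sub (p b) (p a), hM a (hsub (left_mem_Icc.2 hab)),
      hM b (hsub (right_mem_Icc.2 hab))]
  obtain ⟨zm, zp, h0m, hmp, hp1, hcase⟩ := hsign
  have hint : IntervalIntegrable (fun x => |p' x|) MeasureTheory.volume 0 1 :=
    hp'.abs.intervalIntegrable_of_Icc zero_le_one
  have hint_sub : ∀ a b, 0 ≤ a → a ≤ b → b ≤ 1 →
      IntervalIntegrable (fun x => |p' x|) MeasureTheory.volume a b := fun a b h0a hab hb1 =>
    hint.mono_set (by rw [uIcc_of_le hab, uIcc_of_le zero_le_one]; exact Icc_subset_Icc h0a hb1)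
  rw [← intervalIntegral.integral_add_adjacent_intervals
      (hint_sub 0 zm le_rfl h0m (hmp.trans hp1)) (hint_sub zm 1 h0m (hmp.trans hp1) le_rfl),
    ← intervalIntegral.integral_add_adjacent_intervals
      (hint_sub zm zp h0m hmp hp1) (hint_sub zp 1 (h0m.trans hmp) hp1 le_rfl)]
  have h₁ := piece 0 zm le_rfl h0m (hmp.trans hp1)
  have h₂ := piece zm zp h0m hmp hp1
  have h₃ := piece zp 1 (h0m.trans hmp) hp1 le_rfl
  rcases hcase with ⟨hmid, hout⟩ | ⟨hmid, hout⟩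
  · linarith [h₁ (Or.inr fun x hx => hout x (Or.inl hx)), h₂ (Or.inl hmid),
      h₃ (Or.inr fun x hx => hout x (Or.inr hx))]
  · linarith [h₁ (Or.inl fun x hx => hout x (Or.inl hx)), h₂ (Or.inr hmid),
      h₃ (Or.inl fun x hx => hout x (Or.inr hx))]

theorem abs_inv_le_inv_of_le_abs {x c : ℝ} (hc : 0 < c) (h : c ≤ |x|) : |x⁻¹| ≤ c⁻¹ := by
  rw [abs_inv]
  exact inv_anti₀ hc h

theorem ContinuousOn.neg_div_sq {p p' : ℝ → ℝ} {s : Set ℝ}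
    (hp : ∀ x ∈ s, HasDerivWithinAt p (p' x) s x) (hp' : ContinuousOn p' s)
    (hp0 : ∀ x ∈ s, p x ≠ 0) : ContinuousOn (fun x => -p' x / p x ^ 2) s :=
  hp'.neg.div ((HasDerivWithinAt.continuousOn hp).pow 2) fun x hx => pow_ne_zero 2 (hp0 x hx)

theorem integral_abs_deriv_inv_le_of_changesSignAtMostTwice {p p' : ℝ → ℝ} {c : ℝ} (hc : 0 < c)
    (hp : ∀ x ∈ Icc (0:ℝ) 1, HasDerivWithinAt p (p' x) (Icc 0 1) x)
    (hp' : ContinuousOn p' (Icc 0 1)) (hpc : ∀ x ∈ Icc (0:ℝ) 1, c ≤ |p x|)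
    (hsign : ChangesSignAtMostTwice p') :
    ∫ x in (0:ℝ)..1, |-p' x / p x ^ 2| ≤ 6 * c⁻¹ := by
  have hp0 : ∀ x ∈ Icc (0:ℝ) 1, p x ≠ 0 := fun x hx => abs_pos.1 (hc.trans_le (hpc x hx))
  exact integral_abs_deriv_le_of_changesSignAtMostTwice (p := fun x => (p x)⁻¹)
    (fun x hx => (hp x hx).inv (hp0 x hx)) (ContinuousOn.neg_div_sq hp hp' hp0)
    (fun x hx => abs_inv_le_inv_of_le_abs hc (hpc x hx))
    (hsign.neg.div_nonneg fun x => sq_nonneg (p x))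

theorem integral_abs_deriv_mul_le {u u' v v' : ℝ → ℝ} {a b Mu Mv : ℝ} (hab : a ≤ b)
    (hu : ∀ x ∈ Icc a b, HasDerivWithinAt u (u' x) (Icc a b) x) (hu' : ContinuousOn u' (Icc a b))
    (hv : ∀ x ∈ Icc a b, HasDerivWithinAt v (v' x) (Icc a b) x) (hv' : ContinuousOn v' (Icc a b))
    (hMu : ∀ x ∈ Icc a b, |u x| ≤ Mu) (hMv : ∀ x ∈ Icc a b, |v x| ≤ Mv) :
    ∫ x in a..b, |u' x * v x + u x * v' x|
      ≤ Mv * (∫ x in a..b, |u' x|) + Mu * ∫ x in a..b, |v' x| := by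
  have hint_u' : IntervalIntegrable (fun x => |u' x|) MeasureTheory.volume a b :=
    hu'.abs.intervalIntegrable_of_Icc hab
  have hint_v' : IntervalIntegrable (fun x => |v' x|) MeasureTheory.volume a b :=
    hv'.abs.intervalIntegrable_of_Icc hab
  rw [← intervalIntegral.integral_const_mul, ← intervalIntegral.integral_const_mul,
    ← intervalIntegral.integral_add (hint_u'.const_mul _) (hint_v'.const_mul _)]
  refine intervalIntegral.integral_mono_on hab ?_ ((hint_u'.const_mul _).add (hint_v'.const_mul _))
    fun x hx => ?_
  · exact ((hu'.mul (HasDerivWithinAt.continuousOn hv)).add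
      ((HasDerivWithinAt.continuousOn hu).mul hv')).abs.intervalIntegrable_of_Icc hab
  · calc |u' x * v x + u x * v' x| ≤ |u' x| * |v x| + |u x| * |v' x| := by
          rw [← abs_mul, ← abs_mul]; exact abs_add_le _ _
      _ ≤ Mv * |u' x| + Mu * |v' x| := by
          nlinarith [hMu x hx, hMv x hx, abs_nonneg (u' x), abs_nonneg (v' x)]

theorem integral_abs_deriv_inv_mul_inv_le {p p' q q' : ℝ → ℝ} {c₁ c₂ : ℝ}
    (hc₁ : 0 < c₁) (hc₂ : 0 < c₂)
    (hp : ∀ x ∈ Icc (0:ℝ) 1, HasDerivWithinAt p (p' x) (Icc 0 1) x)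
    (hp' : ContinuousOn p' (Icc 0 1)) (hpc : ∀ x ∈ Icc (0:ℝ) 1, c₁ ≤ |p x|)
    (hp'sign : ChangesSignAtMostTwice p')
    (hq : ∀ x ∈ Icc (0:ℝ) 1, HasDerivWithinAt q (q' x) (Icc 0 1) x)
    (hq' : ContinuousOn q' (Icc 0 1)) (hqc : ∀ x ∈ Icc (0:ℝ) 1, c₂ ≤ |q x|)
    (hq'sign : ChangesSignAtMostTwice q') :
    ∫ x in (0:ℝ)..1, |-p' x / p x ^ 2 * (q x)⁻¹ + (p x)⁻¹ * (-q' x / q x ^ 2)|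
      ≤ 12 * (c₁⁻¹ * c₂⁻¹) := by
  have hp0 : ∀ x ∈ Icc (0:ℝ) 1, p x ≠ 0 := fun x hx => abs_pos.1 (hc₁.trans_le (hpc x hx))
  have hq0 : ∀ x ∈ Icc (0:ℝ) 1, q x ≠ 0 := fun x hx => abs_pos.1 (hc₂.trans_le (hqc x hx))
  calc _ ≤ c₂⁻¹ * (∫ x in (0:ℝ)..1, |-p' x / p x ^ 2|)
        + c₁⁻¹ * ∫ x in (0:ℝ)..1, |-q' x / q x ^ 2| :=
        integral_abs_deriv_mul_le (u := fun x => (p x)⁻¹) (v := fun x => (q x)⁻¹) zero_le_one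
          (fun x hx => (hp x hx).inv (hp0 x hx)) (ContinuousOn.neg_div_sq hp hp' hp0)
          (fun x hx => (hq x hx).inv (hq0 x hx)) (ContinuousOn.neg_div_sq hq hq' hq0)
          (fun x hx => abs_inv_le_inv_of_le_abs hc₁ (hpc x hx))
          (fun x hx => abs_inv_le_inv_of_le_abs hc₂ (hqc x hx))
    _ ≤ c₂⁻¹ * (6 * c₁⁻¹) + c₁⁻¹ * (6 * c₂⁻¹) := by
        gcongr
        · exact integral_abs_deriv_inv_le_of_changesSignAtMostTwice hc₁ hp hp' hpc hp'sign
        · exact integral_abs_deriv_inv_le_of_changesSignAtMostTwice hc₂ hq hq' hqc hq'sign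
    _ = 12 * (c₁⁻¹ * c₂⁻¹) := by ring

theorem norm_integral_exp_mul_deriv_mul_le {φ φ' ψ ψ' : ℝ → ℝ} {a b : ℝ} (hab : a ≤ b)
    (hφ : ∀ x ∈ Icc a b, HasDerivWithinAt φ (φ' x) (Icc a b) x) (hφ' : ContinuousOn φ' (Icc a b))
    (hψ : ∀ x ∈ Icc a b, HasDerivWithinAt ψ (ψ' x) (Icc a b) x) (hψ' : ContinuousOn ψ' (Icc a b)) :
    ‖∫ x in a..b, Complex.exp (Complex.I * ((2 * π * φ x : ℝ) : ℂ)) * ((φ' x * ψ x : ℝ) : ℂ)‖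
      ≤ (|ψ a| + |ψ b| + ∫ x in a..b, |ψ' x|) / (2 * π) := by
  set e : ℝ → ℂ := fun x => Complex.exp (Complex.I * ((2 * π * φ x : ℝ) : ℂ))
  set e' : ℝ → ℂ := fun x => Complex.I * ((2 * π * φ' x : ℝ) : ℂ) * e x
  have he : ∀ x ∈ uIcc a b, HasDerivWithinAt e (e' x) (uIcc a b) x := by
    rw [uIcc_of_le hab]
    intro x hx
    convert ((((hφ x hx).const_mul (2 * π)).ofReal_comp).const_mul Complex.I).cexp using 1
    simp only [e', e]
    ring
  have hψc : ∀ x ∈ uIcc a b, HasDerivWithinAt (fun x => (ψ x : ℂ)) (ψ' x : ℂ) (uIcc a b) x := by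
    rw [uIcc_of_le hab]
    exact fun x hx => (hψ x hx).ofReal_comp
  have he_norm : ∀ x, ‖e x‖ = 1 := fun x => Complex.norm_exp_I_mul_ofReal _
  have hec : ContinuousOn e (Icc a b) := fun x hx =>
    (he x (uIcc_of_le hab ▸ hx)).continuousWithinAt.mono (uIcc_of_le hab).ge
  have hparts := intervalIntegral.integral_mul_deriv_eq_deriv_mul_of_hasDerivWithinAt hψc he
    ((Complex.continuous_ofReal.comp_continuousOn hψ').intervalIntegrable_of_Icc hab)
    (((continuousOn_const.mul
      (Complex.continuous_ofReal.comp_continuousOn (continuousOn_const.mul hφ'))).mul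
      hec).intervalIntegrable_of_Icc hab)
  have hintegrand : (fun x => e x * ((φ' x * ψ x : ℝ) : ℂ))
      = fun x => (2 * π * Complex.I)⁻¹ * ((ψ x : ℂ) * e' x) := by
    ext x
    simp only [e']
    push_cast
    field_simp [Complex.I_ne_zero, Real.pi_ne_zero]
  have hremainder : ‖∫ x in a..b, (ψ' x : ℂ) * e x‖ ≤ ∫ x in a..b, |ψ' x| :=
    (intervalIntegral.norm_integral_le_integral_norm hab).trans_eq
      (by simp only [norm_mul, he_norm, Complex.norm_real, Real.norm_eq_abs, mul_one])
  rw [hintegrand, intervalIntegral.integral_const_mul, hparts, norm_mul, norm_inv]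
  have hnorm_2piI : ‖2 * π * Complex.I‖ = 2 * π := by
    simp [abs_of_pos Real.pi_pos]
  rw [hnorm_2piI, inv_mul_eq_div]
  gcongr
  calc ‖(ψ b : ℂ) * e b - (ψ a : ℂ) * e a - ∫ x in a..b, (ψ' x : ℂ) * e x‖
      ≤ ‖(ψ b : ℂ) * e b‖ + ‖(ψ a : ℂ) * e a‖ + ‖∫ x in a..b, (ψ' x : ℂ) * e x‖ :=
        (norm_sub_le _ _).trans (add_le_add_left (norm_sub_le _ _) _)
    _ ≤ |ψ a| + |ψ b| + ∫ x in a..b, |ψ' x| := by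
        simp only [norm_mul, he_norm, Complex.norm_real, Real.norm_eq_abs, mul_one]
        linarith

theorem stmt_3 (g g' g'' G G' : ℝ → ℝ) (c₁ c₂ : ℝ) (hc₁ : 0 < c₁) (hc₂ : 0 < c₂)
    -- g is C² on [0,1] with first derivative g' and second derivative g''
    (hg' : ∀ z ∈ Set.Icc (0:ℝ) 1, HasDerivWithinAt g (g' z) (Set.Icc (0:ℝ) 1) z)
    (hg'' : ∀ z ∈ Set.Icc (0:ℝ) 1, HasDerivWithinAt g' (g'' z) (Set.Icc (0:ℝ) 1) z)
    (hg''c : ContinuousOn g'' (Set.Icc (0:ℝ) 1))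
    -- G is C¹ on [0,1] with derivative G'
    (hG' : ∀ z ∈ Set.Icc (0:ℝ) 1, HasDerivWithinAt G (G' z) (Set.Icc (0:ℝ) 1) z)
    (hG'c : ContinuousOn G' (Set.Icc (0:ℝ) 1))
    -- lower bounds and sign conditions
    (hg'lb : ∀ z ∈ Set.Icc (0:ℝ) 1, c₁ ≤ |g' z|)
    (hg''sign : ChangesSignAtMostTwice g'')
    (hGlb : ∀ z ∈ Set.Icc (0:ℝ) 1, c₂ ≤ |G z|)
    (hG'sign : ChangesSignAtMostTwice G') :
    ‖∫ z in (0:ℝ)..1, Complex.exp (Complex.I * ((2 * π * g z : ℝ) : ℂ)) / (G z : ℂ)‖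
      ≤ 14 / (π * c₁ * c₂) := by
  have hg'0 : ∀ z ∈ Icc (0:ℝ) 1, g' z ≠ 0 := fun z hz => abs_pos.1 (hc₁.trans_le (hg'lb z hz))
  have hG0 : ∀ z ∈ Icc (0:ℝ) 1, G z ≠ 0 := fun z hz => abs_pos.1 (hc₂.trans_le (hGlb z hz))
  have hamplitude_le : ∀ z ∈ Icc (0:ℝ) 1, |(g' z)⁻¹ * (G z)⁻¹| ≤ c₁⁻¹ * c₂⁻¹ := fun z hz => by
    rw [abs_mul]
    exact mul_le_mul (abs_inv_le_inv_of_le_abs hc₁ (hg'lb z hz))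
      (abs_inv_le_inv_of_le_abs hc₂ (hGlb z hz)) (abs_nonneg _) (inv_nonneg.2 hc₁.le)
  have hintegrand : ∫ z in (0:ℝ)..1, Complex.exp (Complex.I * ((2 * π * g z : ℝ) : ℂ)) / (G z : ℂ)
      = ∫ z in (0:ℝ)..1, Complex.exp (Complex.I * ((2 * π * g z : ℝ) : ℂ))
          * ((g' z * ((g' z)⁻¹ * (G z)⁻¹) : ℝ) : ℂ) :=
    intervalIntegral.integral_congr fun z hz => by
      rw [uIcc_of_le zero_le_one] at hz
      rw [mul_inv_cancel_left₀ (hg'0 z hz), div_eq_mul_inv, Complex.ofReal_inv]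
  rw [hintegrand]
  refine (norm_integral_exp_mul_deriv_mul_le zero_le_one hg' (HasDerivWithinAt.continuousOn hg'')
    (fun z hz => ((hg'' z hz).inv (hg'0 z hz)).mul ((hG' z hz).inv (hG0 z hz)))
    (((ContinuousOn.neg_div_sq hg'' hg''c hg'0).mul
      ((HasDerivWithinAt.continuousOn hG').inv₀ hG0)).add
      (((HasDerivWithinAt.continuousOn hg'').inv₀ hg'0).mul
        (ContinuousOn.neg_div_sq hG' hG'c hG0)))).trans ?_
  calc _ ≤ (c₁⁻¹ * c₂⁻¹ + c₁⁻¹ * c₂⁻¹ + 12 * (c₁⁻¹ * c₂⁻¹)) / (2 * π) := by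
        gcongr
        · exact hamplitude_le 0 (left_mem_Icc.2 zero_le_one)
        · exact hamplitude_le 1 (right_mem_Icc.2 zero_le_one)
        · exact integral_abs_deriv_inv_mul_inv_le hc₁ hc₂ hg'' hg''c hg'lb hg''sign
            hG' hG'c hGlb hG'sign
    _ = 7 / (π * c₁ * c₂) := by field_simp; ring
    _ ≤ 14 / (π * c₁ * c₂) := by gcongr; norm_num
end

section
/- Let g : [0,1] → ℝ be a C² function such that |g′(z)| ≥ c₁ > 0 for all z ∈ [0,1], and such that there exist 0 ≤ z₋ ≤ z₊ ≤ 1 with either (g″ ≥ 0 on [z₋, z₊] and g″ ≤ 0 on [0, z₋] ∪ [z₊, 1]) or the same with the inequalities reversed. Then ∫₀¹ |g″(z)| / g′(z)² dz ≤ 6/c₁. -/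
/-!
On each of the three intervals where `g''` has constant sign, `|g''| / g'^2` is `±` the derivative
of `1 / g'`, so its integral there is `|1/g'(b) - 1/g'(a)| ≤ 2 / c₁`. The fundamental theorem of calculus
applies because a derivative of constant sign is automatically integrable.
-/

open Real Set

open MeasureTheory intervalIntegral

def HasConstSignOn (f : ℝ → ℝ) (s : Set ℝ) : Prop :=
  (∀ x ∈ s, 0 ≤ f x) ∨ (∀ x ∈ s, f x ≤ 0)

namespace HasConstSignOn

variable {f : ℝ → ℝ} {s t : Set ℝ}

theorem mono (h : HasConstSignOn f t) (hst : s ⊆ t) : HasConstSignOn f s :=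
  h.imp (fun h x hx => h x (hst hx)) (fun h x hx => h x (hst hx))

theorem neg (h : HasConstSignOn f s) : HasConstSignOn (fun x => -f x) s :=
  h.symm.imp (fun h x hx => neg_nonneg.2 (h x hx)) (fun h x hx => neg_nonpos.2 (h x hx))

theorem div_nonneg {g : ℝ → ℝ} (h : HasConstSignOn f s) (hg : ∀ x ∈ s, 0 ≤ g x) :
    HasConstSignOn (fun x => f x / g x) s :=
  h.imp (fun h x hx => _root_.div_nonneg (h x hx) (hg x hx))
    (fun h x hx => div_nonpos_of_nonpos_of_nonneg (h x hx) (hg x hx))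

end HasConstSignOn

theorem ChangesSignAtMostTwice.exists_hasConstSignOn {f : ℝ → ℝ} (h : ChangesSignAtMostTwice f) :
    ∃ zm zp : ℝ, 0 ≤ zm ∧ zm ≤ zp ∧ zp ≤ 1 ∧ HasConstSignOn f (Icc 0 zm) ∧
      HasConstSignOn f (Icc zm zp) ∧ HasConstSignOn f (Icc zp 1) := by
  obtain ⟨zm, zp, h0, hmp, h1, ⟨hmid, hout⟩ | ⟨hmid, hout⟩⟩ := h
  · exact ⟨zm, zp, h0, hmp, h1, .inr fun z hz => hout z (.inl hz), .inl hmid,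
      .inr fun z hz => hout z (.inr hz)⟩
  · exact ⟨zm, zp, h0, hmp, h1, .inl fun z hz => hout z (.inl hz), .inr hmid,
      .inl fun z hz => hout z (.inr hz)⟩

section FTC

variable {F f : ℝ → ℝ} {a b : ℝ}

theorem intervalIntegrable_deriv_of_hasConstSignOn (hab : a ≤ b) (hF : ContinuousOn F (Icc a b))
    (hderiv : ∀ x ∈ Ioo a b, HasDerivAt F (f x) x) (hsign : HasConstSignOn f (Ioo a b)) :
    IntervalIntegrable f volume a b := by
  rw [intervalIntegrable_iff_integrableOn_Ioc_of_le hab]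
  rcases hsign with hpos | hneg
  · exact integrableOn_deriv_of_nonneg hF hderiv hpos
  · simpa using (integrableOn_deriv_of_nonneg hF.neg (fun x hx => (hderiv x hx).neg)
      fun x hx => neg_nonneg.2 (hneg x hx)).neg

theorem integral_abs_deriv_eq_abs_sub_of_nonneg (hab : a ≤ b) (hF : ContinuousOn F (Icc a b))
    (hderiv : ∀ x ∈ Ioo a b, HasDerivAt F (f x) x) (hpos : ∀ x ∈ Ioo a b, 0 ≤ f x) :
    ∫ x in a..b, |f x| = |F b - F a| := by
  have hFTC : ∫ x in a..b, |f x| = F b - F a := by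
    rw [integral_congr_Ioo_of_le hab fun x hx => abs_of_nonneg (hpos x hx)]
    exact integral_eq_sub_of_hasDerivAt_of_le hab hF hderiv
      (intervalIntegrable_deriv_of_hasConstSignOn hab hF hderiv (.inl hpos))
  rw [hFTC, abs_of_nonneg (hFTC ▸ integral_nonneg hab fun x _ => abs_nonneg (f x))]

theorem integral_abs_deriv_eq_abs_sub (hab : a ≤ b) (hF : ContinuousOn F (Icc a b))
    (hderiv : ∀ x ∈ Ioo a b, HasDerivAt F (f x) x) (hsign : HasConstSignOn f (Ioo a b)) :
    ∫ x in a..b, |f x| = |F b - F a| := by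
  rcases hsign with hpos | hneg
  · exact integral_abs_deriv_eq_abs_sub_of_nonneg hab hF hderiv hpos
  · have := integral_abs_deriv_eq_abs_sub_of_nonneg hab hF.neg (fun x hx => (hderiv x hx).neg)
      fun x hx => neg_nonneg.2 (hneg x hx)
    simp only [Pi.neg_apply, abs_neg, neg_sub_neg] at this
    rwa [abs_sub_comm] at this

end FTC

theorem abs_inv_sub_inv_le_two_div {x y c : ℝ} (hc : 0 < c) (hx : c ≤ |x|) (hy : c ≤ |y|) :
    |x⁻¹ - y⁻¹| ≤ 2 / c :=
  calc |x⁻¹ - y⁻¹| ≤ |x⁻¹| + |y⁻¹| := abs_sub _ _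
    _ ≤ c⁻¹ + c⁻¹ := by
      rw [abs_inv, abs_inv]; exact add_le_add (inv_anti₀ hc hx) (inv_anti₀ hc hy)
    _ = 2 / c := by ring

section Reciprocal

variable {g' g'' : ℝ → ℝ} {a b : ℝ}

theorem hasDerivAt_inv_of_hasDerivWithinAt_Icc
    (hderiv : ∀ z ∈ Icc a b, HasDerivWithinAt g' (g'' z) (Icc a b) z)
    (hne : ∀ z ∈ Icc a b, g' z ≠ 0) {x : ℝ} (hx : x ∈ Ioo a b) :
    HasDerivAt (fun z => (g' z)⁻¹) (-g'' x / g' x ^ 2) x :=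
  ((hderiv x (Ioo_subset_Icc_self hx)).hasDerivAt (Icc_mem_nhds hx.1 hx.2)).inv
    (hne x (Ioo_subset_Icc_self hx))

theorem continuousOn_inv_of_hasDerivWithinAt_Icc
    (hderiv : ∀ z ∈ Icc a b, HasDerivWithinAt g' (g'' z) (Icc a b) z)
    (hne : ∀ z ∈ Icc a b, g' z ≠ 0) :
    ContinuousOn (fun z => (g' z)⁻¹) (Icc a b) :=
  ContinuousOn.inv₀ (fun z hz => (hderiv z hz).continuousWithinAt) hne

theorem abs_div_sq_eq_abs_neg_div_sq (g' g'' : ℝ → ℝ) :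
    (fun z => |g'' z| / g' z ^ 2) = fun z => |-g'' z / g' z ^ 2| := by
  ext z; rw [abs_div, abs_neg, abs_pow, sq_abs]

theorem intervalIntegrable_abs_div_sq (hab : a ≤ b)
    (hderiv : ∀ z ∈ Icc a b, HasDerivWithinAt g' (g'' z) (Icc a b) z)
    (hne : ∀ z ∈ Icc a b, g' z ≠ 0) (hsign : HasConstSignOn g'' (Icc a b)) :
    IntervalIntegrable (fun z => |g'' z| / g' z ^ 2) volume a b := by
  rw [abs_div_sq_eq_abs_neg_div_sq]
  exact (intervalIntegrable_deriv_of_hasConstSignOn hab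
    (continuousOn_inv_of_hasDerivWithinAt_Icc hderiv hne)
    (fun x hx => hasDerivAt_inv_of_hasDerivWithinAt_Icc hderiv hne hx)
    ((hsign.mono Ioo_subset_Icc_self).neg.div_nonneg fun x _ => sq_nonneg _)).abs

theorem integral_abs_div_sq_eq_abs_sub_inv (hab : a ≤ b)
    (hderiv : ∀ z ∈ Icc a b, HasDerivWithinAt g' (g'' z) (Icc a b) z)
    (hne : ∀ z ∈ Icc a b, g' z ≠ 0) (hsign : HasConstSignOn g'' (Icc a b)) :
    ∫ z in a..b, |g'' z| / g' z ^ 2 = |(g' b)⁻¹ - (g' a)⁻¹| := by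
  rw [abs_div_sq_eq_abs_neg_div_sq]
  exact integral_abs_deriv_eq_abs_sub hab (continuousOn_inv_of_hasDerivWithinAt_Icc hderiv hne)
    (fun x hx => hasDerivAt_inv_of_hasDerivWithinAt_Icc hderiv hne hx)
    ((hsign.mono Ioo_subset_Icc_self).neg.div_nonneg fun x _ => sq_nonneg _)

end Reciprocal

theorem stmt_6_general (g' g'' : ℝ → ℝ) (c₁ : ℝ) (hc₁ : 0 < c₁)
    (hg'' : ∀ z ∈ Set.Icc (0:ℝ) 1, HasDerivWithinAt g' (g'' z) (Set.Icc (0:ℝ) 1) z)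
    (hg'lb : ∀ z ∈ Set.Icc (0:ℝ) 1, c₁ ≤ |g' z|)
    (hg''sign : ChangesSignAtMostTwice g'') :
    (∫ z in (0:ℝ)..1, |g'' z| / (g' z) ^ 2) ≤ 6 / c₁ := by
  obtain ⟨zm, zp, h0, hmp, h1, s₁, s₂, s₃⟩ := hg''sign.exists_hasConstSignOn
  have piece : ∀ a b, 0 ≤ a → a ≤ b → b ≤ 1 → HasConstSignOn g'' (Icc a b) →
      IntervalIntegrable (fun z => |g'' z| / g' z ^ 2) volume a b ∧
        ∫ z in a..b, |g'' z| / g' z ^ 2 ≤ 2 / c₁ := by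
    intro a b ha hab hb hsign
    have hsub : Icc a b ⊆ Icc 0 1 := Icc_subset_Icc ha hb
    have hderiv z (hz : z ∈ Icc a b) := (hg'' z (hsub hz)).mono hsub
    have hne z (hz : z ∈ Icc a b) : g' z ≠ 0 :=
      abs_pos.1 (hc₁.trans_le (hg'lb z (hsub hz)))
    refine ⟨intervalIntegrable_abs_div_sq hab hderiv hne hsign, ?_⟩
    rw [integral_abs_div_sq_eq_abs_sub_inv hab hderiv hne hsign]
    exact abs_inv_sub_inv_le_two_div hc₁ (hg'lb b (hsub (right_mem_Icc.2 hab)))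
      (hg'lb a (hsub (left_mem_Icc.2 hab)))
  obtain ⟨i₁, b₁⟩ := piece 0 zm le_rfl h0 (hmp.trans h1) s₁
  obtain ⟨i₂, b₂⟩ := piece zm zp h0 hmp h1 s₂
  obtain ⟨i₃, b₃⟩ := piece zp 1 (h0.trans hmp) h1 le_rfl s₃
  rw [← integral_add_adjacent_intervals i₁ (i₂.trans i₃),
    ← integral_add_adjacent_intervals i₂ i₃]
  linarith [show 6 / c₁ = 3 * (2 / c₁) by ring]

theorem stmt_6 (g g' g'' : ℝ → ℝ) (c₁ : ℝ) (hc₁ : 0 < c₁)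
    -- g is C² on [0,1] with first derivative g' and second derivative g''
    (hg' : ∀ z ∈ Set.Icc (0:ℝ) 1, HasDerivWithinAt g (g' z) (Set.Icc (0:ℝ) 1) z)
    (hg'' : ∀ z ∈ Set.Icc (0:ℝ) 1, HasDerivWithinAt g' (g'' z) (Set.Icc (0:ℝ) 1) z)
    (hg''c : ContinuousOn g'' (Set.Icc (0:ℝ) 1))
    (hg'lb : ∀ z ∈ Set.Icc (0:ℝ) 1, c₁ ≤ |g' z|)
    (hg''sign : ChangesSignAtMostTwice g'') :
    (∫ z in (0:ℝ)..1, |g'' z| / (g' z) ^ 2) ≤ 6 / c₁ :=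
  stmt_6_general g' g'' c₁ hc₁ hg'' hg'lb hg''sign
end

section
/- Let G : [0,1] → ℝ be a C¹ function such that |G(z)| ≥ c₂ > 0 for all z ∈ [0,1], and such that there exist 0 ≤ z₋ ≤ z₊ ≤ 1 with either (G′ ≥ 0 on [z₋, z₊] and G′ ≤ 0 on [0, z₋] ∪ [z₊, 1]) or the same with the inequalities reversed. Let h : [0,1] → ℝ be measurable with |h(z)| ≥ c₁ > 0 for all z ∈ [0,1]. Then ∫₀¹ |G′(z)| / ( |h(z)| · G(z)² ) dz ≤ 6/(c₁ c₂). -/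
/-!
Since `|h| ≥ c₁`, the integrand is at most `c₁⁻¹ |G'| / G²`.
On each of the three intervals `[0, z₋]`, `[z₋, z₊]`, `[z₊, 1]` the derivative `G'` has a
constant sign, so there `∫ |G'| / G² = |∫ G' / G²| = |1/G(a) - 1/G(b)| ≤ 2 / c₂`.
-/

open Real Set

open MeasureTheory intervalIntegral

theorem intervalIntegral.integral_mono_of_nonneg_on {μ : Measure ℝ} {f g : ℝ → ℝ} {a b : ℝ}
    (hab : a ≤ b) (hf : ∀ x ∈ Icc a b, 0 ≤ f x) (hg : IntervalIntegrable g μ a b)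
    (hfg : ∀ x ∈ Icc a b, f x ≤ g x) : ∫ x in a..b, f x ∂μ ≤ ∫ x in a..b, g x ∂μ := by
  rw [integral_of_le hab, integral_of_le hab]
  exact integral_mono_of_nonneg
    (ae_restrict_of_forall_mem measurableSet_Ioc fun x hx => hf x (Ioc_subset_Icc_self hx)) hg.1
    (ae_restrict_of_forall_mem measurableSet_Ioc fun x hx => hfg x (Ioc_subset_Icc_self hx))

section InverseSquare

variable {G G' : ℝ → ℝ} {a b c : ℝ}

theorem intervalIntegrable_div_sq {f : ℝ → ℝ} (hab : a ≤ b) (hf : ContinuousOn f (Icc a b))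
    (hG : ContinuousOn G (Icc a b)) (hG0 : ∀ z ∈ Icc a b, G z ≠ 0) :
    IntervalIntegrable (fun z => f z / G z ^ 2) volume a b := by
  refine ContinuousOn.intervalIntegrable ?_
  rw [uIcc_of_le hab]
  exact hf.div (hG.pow 2) fun z hz => pow_ne_zero 2 (hG0 z hz)

theorem integral_deriv_div_sq (hab : a ≤ b)
    (hG : ∀ z ∈ Icc a b, HasDerivWithinAt G (G' z) (Icc a b) z)
    (hG'c : ContinuousOn G' (Icc a b)) (hG0 : ∀ z ∈ Icc a b, G z ≠ 0) :
    ∫ z in a..b, G' z / G z ^ 2 = (G a)⁻¹ - (G b)⁻¹ := by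
  have hGc : ContinuousOn G (Icc a b) := fun z hz => (hG z hz).continuousWithinAt
  have hprim : ∀ z ∈ Ioo a b, HasDerivAt (-G⁻¹) (G' z / G z ^ 2) z := by
    intro z hz
    have hGz : HasDerivAt G (G' z) z :=
      (hG z (Ioo_subset_Icc_self hz)).hasDerivAt (Icc_mem_nhds hz.1 hz.2)
    simpa only [neg_div, neg_neg] using (hGz.inv (hG0 z (Ioo_subset_Icc_self hz))).neg
  rw [integral_eq_sub_of_hasDerivAt_of_le hab (hGc.inv₀ hG0).neg hprim
    (intervalIntegrable_div_sq hab hG'c hGc hG0), Pi.neg_apply, Pi.neg_apply, Pi.inv_apply,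
    Pi.inv_apply, neg_sub_neg]

theorem integral_abs_deriv_div_sq_le_of_nonneg (hc : 0 < c) (hab : a ≤ b)
    (hG : ∀ z ∈ Icc a b, HasDerivWithinAt G (G' z) (Icc a b) z)
    (hG'c : ContinuousOn G' (Icc a b)) (hGlb : ∀ z ∈ Icc a b, c ≤ |G z|)
    (hG'0 : ∀ z ∈ Icc a b, 0 ≤ G' z) :
    ∫ z in a..b, |G' z| / G z ^ 2 ≤ 2 / c := by
  have hG0 : ∀ z ∈ Icc a b, G z ≠ 0 := fun z hz =>
    abs_pos.mp (hc.trans_le (hGlb z hz))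
  have hinv : ∀ z ∈ Icc a b, |(G z)⁻¹| ≤ c⁻¹ := fun z hz => by
    rw [abs_inv]; exact inv_anti₀ hc (hGlb z hz)
  have hinv_a := hinv a (left_mem_Icc.mpr hab)
  have hinv_b := hinv b (right_mem_Icc.mpr hab)
  calc ∫ z in a..b, |G' z| / G z ^ 2 = ∫ z in a..b, G' z / G z ^ 2 := by
        refine integral_congr fun z hz => ?_
        rw [uIcc_of_le hab] at hz
        simp only [abs_of_nonneg (hG'0 z hz)]
    _ = (G a)⁻¹ - (G b)⁻¹ := integral_deriv_div_sq hab hG hG'c hG0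
    _ ≤ 2 / c := by
        linarith [le_abs_self (G a)⁻¹, neg_abs_le (G b)⁻¹, show 2 / c = c⁻¹ + c⁻¹ by ring]

theorem integral_abs_deriv_div_sq_le (hc : 0 < c) (hab : a ≤ b)
    (hG : ∀ z ∈ Icc a b, HasDerivWithinAt G (G' z) (Icc a b) z)
    (hG'c : ContinuousOn G' (Icc a b)) (hGlb : ∀ z ∈ Icc a b, c ≤ |G z|)
    (hG'sign : (∀ z ∈ Icc a b, 0 ≤ G' z) ∨ ∀ z ∈ Icc a b, G' z ≤ 0) :
    ∫ z in a..b, |G' z| / G z ^ 2 ≤ 2 / c := by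
  rcases hG'sign with hG'0 | hG'0
  · exact integral_abs_deriv_div_sq_le_of_nonneg hc hab hG hG'c hGlb hG'0
  · -- pass to `-G`, which has the same integrand
    simpa only [abs_neg, neg_sq] using
      integral_abs_deriv_div_sq_le_of_nonneg (G := fun z => -G z) (G' := fun z => -G' z) hc hab
        (fun z hz => (hG z hz).neg) hG'c.neg (by simpa only [abs_neg] using hGlb)
        (fun z hz => neg_nonneg.mpr (hG'0 z hz))

end InverseSquare

theorem integral_abs_deriv_div_sq_le_of_changesSignAtMostTwice {G G' : ℝ → ℝ} {c : ℝ}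
    (hc : 0 < c) (hG : ∀ z ∈ Icc (0:ℝ) 1, HasDerivWithinAt G (G' z) (Icc (0:ℝ) 1) z)
    (hG'c : ContinuousOn G' (Icc (0:ℝ) 1)) (hGlb : ∀ z ∈ Icc (0:ℝ) 1, c ≤ |G z|)
    (hG'sign : ChangesSignAtMostTwice G') :
    ∫ z in (0:ℝ)..1, |G' z| / G z ^ 2 ≤ 6 / c := by
  obtain ⟨zm, zp, h0m, hmp, hp1, hsign⟩ := hG'sign
  have hpiece : ∀ a b, 0 ≤ a → a ≤ b → b ≤ 1 →
      ((∀ z ∈ Icc a b, 0 ≤ G' z) ∨ ∀ z ∈ Icc a b, G' z ≤ 0) →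
      ∫ z in a..b, |G' z| / G z ^ 2 ≤ 2 / c := fun a b ha hab hb hab_sign =>
    have hsub : Icc a b ⊆ Icc 0 1 := Icc_subset_Icc ha hb
    integral_abs_deriv_div_sq_le hc hab (fun z hz => (hG z (hsub hz)).mono hsub)
      (hG'c.mono hsub) (fun z hz => hGlb z (hsub hz)) hab_sign
  have hint : ∀ a b, 0 ≤ a → a ≤ b → b ≤ 1 →
      IntervalIntegrable (fun z => |G' z| / G z ^ 2) volume a b := fun a b ha hab hb => by
    have hsub : Icc a b ⊆ Icc 0 1 := Icc_subset_Icc ha hb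
    exact intervalIntegrable_div_sq hab (hG'c.abs.mono hsub)
      (fun z hz => (hG z (hsub hz)).continuousWithinAt.mono hsub)
      fun z hz => abs_pos.mp (hc.trans_le (hGlb z (hsub hz)))
  rw [← integral_add_adjacent_intervals (hint 0 zm le_rfl h0m (hmp.trans hp1))
      (hint zm 1 h0m (hmp.trans hp1) le_rfl),
    ← integral_add_adjacent_intervals (hint zm zp h0m hmp hp1)
      (hint zp 1 (h0m.trans hmp) hp1 le_rfl),
    show 6 / c = 2 / c + (2 / c + 2 / c) by ring]
  have hleft := hpiece 0 zm le_rfl h0m (hmp.trans hp1)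
  have hmid := hpiece zm zp h0m hmp hp1
  have hright := hpiece zp 1 (h0m.trans hmp) hp1 le_rfl
  rcases hsign with ⟨hmid_sign, hout_sign⟩ | ⟨hmid_sign, hout_sign⟩
  · exact add_le_add (hleft (.inr fun z hz => hout_sign z (.inl hz)))
      (add_le_add (hmid (.inl hmid_sign)) (hright (.inr fun z hz => hout_sign z (.inr hz))))
  · exact add_le_add (hleft (.inl fun z hz => hout_sign z (.inl hz)))
      (add_le_add (hmid (.inr hmid_sign)) (hright (.inl fun z hz => hout_sign z (.inr hz))))

theorem stmt_7_general (G G' h : ℝ → ℝ) (c₁ c₂ : ℝ) (hc₁ : 0 < c₁) (hc₂ : 0 < c₂)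
    -- G is C¹ on [0,1] with derivative G'
    (hG' : ∀ z ∈ Set.Icc (0:ℝ) 1, HasDerivWithinAt G (G' z) (Set.Icc (0:ℝ) 1) z)
    (hG'c : ContinuousOn G' (Set.Icc (0:ℝ) 1))
    (hGlb : ∀ z ∈ Set.Icc (0:ℝ) 1, c₂ ≤ |G z|)
    (hG'sign : ChangesSignAtMostTwice G')
    (hhlb : ∀ z ∈ Set.Icc (0:ℝ) 1, c₁ ≤ |h z|) :
    (∫ z in (0:ℝ)..1, |G' z| / (|h z| * (G z) ^ 2)) ≤ 6 / (c₁ * c₂) := by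
  have hbound := integral_abs_deriv_div_sq_le_of_changesSignAtMostTwice hc₂ hG' hG'c hGlb hG'sign
  have hG0 : ∀ z ∈ Icc (0:ℝ) 1, G z ≠ 0 := fun z hz => abs_pos.mp (hc₂.trans_le (hGlb z hz))
  have hint := intervalIntegrable_div_sq zero_le_one hG'c.abs
    (fun z hz => (hG' z hz).continuousWithinAt) hG0
  have hpointwise : ∀ z ∈ Icc (0:ℝ) 1,
      |G' z| / (|h z| * G z ^ 2) ≤ c₁⁻¹ * (|G' z| / G z ^ 2) := fun z hz => by
    rw [← div_eq_inv_mul, div_div, mul_comm (G z ^ 2)]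
    gcongr
    · have := hG0 z hz
      positivity
    · exact hhlb z hz
  calc ∫ z in (0:ℝ)..1, |G' z| / (|h z| * G z ^ 2)
      ≤ ∫ z in (0:ℝ)..1, c₁⁻¹ * (|G' z| / G z ^ 2) :=
        integral_mono_of_nonneg_on zero_le_one (fun z _ => by positivity)
          (hint.const_mul _) hpointwise
    _ = c₁⁻¹ * ∫ z in (0:ℝ)..1, |G' z| / G z ^ 2 := integral_const_mul _ _
    _ ≤ c₁⁻¹ * (6 / c₂) := by gcongr
    _ = 6 / (c₁ * c₂) := by field_simp

theorem stmt_7 (G G' h : ℝ → ℝ) (c₁ c₂ : ℝ) (hc₁ : 0 < c₁) (hc₂ : 0 < c₂)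
    -- G is C¹ on [0,1] with derivative G'
    (hG' : ∀ z ∈ Set.Icc (0:ℝ) 1, HasDerivWithinAt G (G' z) (Set.Icc (0:ℝ) 1) z)
    (hG'c : ContinuousOn G' (Set.Icc (0:ℝ) 1))
    (hGlb : ∀ z ∈ Set.Icc (0:ℝ) 1, c₂ ≤ |G z|)
    (hG'sign : ChangesSignAtMostTwice G')
    -- h is measurable and bounded below in modulus
    (hmeas : Measurable h)
    (hhlb : ∀ z ∈ Set.Icc (0:ℝ) 1, c₁ ≤ |h z|) :
    (∫ z in (0:ℝ)..1, |G' z| / (|h z| * (G z) ^ 2)) ≤ 6 / (c₁ * c₂) :=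
  stmt_7_general G G' h c₁ c₂ hc₁ hc₂ hG' hG'c hGlb hG'sign hhlb
end

section
/- Let M ≥ 2 be an integer. Let X₁, …, X_M be i.i.d. random elements of a measurable space E, let W₁, …, W_M be i.i.d. random elements of a measurable space E′, with all 2M variables mutually independent, and let F : E × E′ → ℂ be measurable with |F| ≤ 1 everywhere. Define S = | E[ F(X₁, W₁) · conj(F(X₁, W₂)) · F(X₂, W₂) · conj(F(X₂, W₁)) ] |. Then (1/M³) · | Σ_{i,k,l,m=1}^{M} E[ F(X_k, W_i) · conj(F(X_k, W_l)) · F(X_m, W_l) · conj(F(X_m, W_i)) ] | ≤ 2 + M·S. -/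
open MeasureTheory ProbabilityTheory
open scoped BigOperators

universe u

/-!
Expanding the sum, a term with `i ≠ l` and `k ≠ m` involves four distinct independent variables,
so its law is the product of the marginals and, by identical distribution, it equals the reference
term whose modulus is `S`. The at most `2 M³` remaining terms with `i = l` or `k = m` have modulus
at most `1` since `|F| ≤ 1`.
-/

section FourCycle

variable {E E' : Type*}

def fourCycle (F : E × E' → ℂ) (x x' : E) (w w' : E') : ℂ :=
  F (x, w) * (starRingEnd ℂ) (F (x, w')) * F (x', w') * (starRingEnd ℂ) (F (x', w))

lemma norm_fourCycle_le_one {F : E × E' → ℂ} (hF : ∀ p, ‖F p‖ ≤ 1) (x x' : E) (w w' : E') :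
    ‖fourCycle F x x' w w'‖ ≤ 1 := by
  simp only [fourCycle, norm_mul, Complex.norm_conj]
  calc ‖F (x, w)‖ * ‖F (x, w')‖ * ‖F (x', w')‖ * ‖F (x', w)‖ ≤ 1 * 1 * 1 * 1 := by
        gcongr <;> exact hF _
    _ = 1 := by norm_num

lemma measurable_fourCycle [MeasurableSpace E] [MeasurableSpace E'] {F : E × E' → ℂ}
    (hF : Measurable F) :
    Measurable fun p : (E × E) × (E' × E') => fourCycle F p.1.1 p.1.2 p.2.1 p.2.2 := by
  unfold fourCycle
  fun_prop

lemma norm_integral_fourCycle_le_one {Ω : Type*} {mΩ : MeasurableSpace Ω} {μ : Measure Ω}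
    [IsProbabilityMeasure μ] {F : E × E' → ℂ} (hF : ∀ p, ‖F p‖ ≤ 1) (X₁ X₂ : Ω → E)
    (W₁ W₂ : Ω → E') :
    ‖∫ ω, fourCycle F (X₁ ω) (X₂ ω) (W₁ ω) (W₂ ω) ∂μ‖ ≤ 1 := by
  simpa using norm_integral_le_of_norm_le_const
    (ae_of_all μ fun ω => norm_fourCycle_le_one hF (X₁ ω) (X₂ ω) (W₁ ω) (W₂ ω))

end FourCycle

lemma ProbabilityTheory.iIndepFun.map_prodMk_prodMk_eq_prod {Ω ι : Type*}
    {mΩ : MeasurableSpace Ω} {μ : Measure Ω} [IsProbabilityMeasure μ] {β : ι → Type*}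
    {m : ∀ i, MeasurableSpace (β i)}
    {f : ∀ i, Ω → β i} (h : iIndepFun f μ) (hf : ∀ i, Measurable (f i)) {a b c d : ι}
    (hab : a ≠ b) (hcd : c ≠ d) (hac : a ≠ c) (had : a ≠ d) (hbc : b ≠ c) (hbd : b ≠ d) :
    μ.map (fun ω => ((f a ω, f b ω), (f c ω, f d ω))) =
      ((μ.map (f a)).prod (μ.map (f b))).prod ((μ.map (f c)).prod (μ.map (f d))) := by
  rw [(h.indepFun_prodMk_prodMk hf a b c d hac had hbc hbd).map_prod_eq_prod_map_map
      ((hf a).prodMk (hf b)).aemeasurable ((hf c).prodMk (hf d)).aemeasurable,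
    (h.indepFun hab).map_prod_eq_prod_map_map (hf a).aemeasurable (hf b).aemeasurable,
    (h.indepFun hcd).map_prod_eq_prod_map_map (hf c).aemeasurable (hf d).aemeasurable]

lemma integral_fourCycle_eq_of_map_eq_prod {Ω E E' : Type*} {mΩ : MeasurableSpace Ω}
    [MeasurableSpace E] [MeasurableSpace E'] {μ : Measure Ω} {F : E × E' → ℂ}
    (hF : Measurable F) {X₁ X₂ : Ω → E} {W₁ W₂ : Ω → E'} (hX₁ : Measurable X₁)
    (hX₂ : Measurable X₂) (hW₁ : Measurable W₁) (hW₂ : Measurable W₂)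
    (hlaw : μ.map (fun ω => ((X₁ ω, X₂ ω), (W₁ ω, W₂ ω))) =
      ((μ.map X₁).prod (μ.map X₂)).prod ((μ.map W₁).prod (μ.map W₂))) :
    ∫ ω, fourCycle F (X₁ ω) (X₂ ω) (W₁ ω) (W₂ ω) ∂μ =
      ∫ p, fourCycle F p.1.1 p.1.2 p.2.1 p.2.2
        ∂(((μ.map X₁).prod (μ.map X₂)).prod ((μ.map W₁).prod (μ.map W₂))) := by
  rw [← hlaw, integral_map ((hX₁.prodMk hX₂).prodMk (hW₁.prodMk hW₂)).aemeasurable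
    (measurable_fourCycle hF).aestronglyMeasurable]

lemma norm_sum_four_le {ι V : Type*} [Fintype ι] [SeminormedAddCommGroup V]
    (a : ι → ι → ι → ι → V) {S : ℝ} (hS : 0 ≤ S) (hle_one : ∀ i k l m, ‖a i k l m‖ ≤ 1)
    (hle_S : ∀ i k l m, i ≠ l → k ≠ m → ‖a i k l m‖ ≤ S) :
    ‖∑ i, ∑ k, ∑ l, ∑ m, a i k l m‖ ≤
      2 * (Fintype.card ι : ℝ) ^ 3 + (Fintype.card ι : ℝ) ^ 4 * S := by
  classical
  have hterm : ∀ i k l m, ‖a i k l m‖ ≤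
      (if i = l then (1 : ℝ) else 0) + (if k = m then (1 : ℝ) else 0) + S := by
    intro i k l m
    split_ifs with hil hkm hkm
    · linarith [hle_one i k l m]
    · linarith [hle_one i k l m]
    · linarith [hle_one i k l m]
    · linarith [hle_S i k l m hil hkm]
  calc ‖∑ i, ∑ k, ∑ l, ∑ m, a i k l m‖
      ≤ ∑ i, ∑ k, ∑ l, ∑ m, ‖a i k l m‖ := by
        refine (norm_sum_le _ _).trans (Finset.sum_le_sum fun i _ => ?_)
        refine (norm_sum_le _ _).trans (Finset.sum_le_sum fun k _ => ?_)
        refine (norm_sum_le _ _).trans (Finset.sum_le_sum fun l _ => ?_)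
        exact norm_sum_le _ _
    _ ≤ ∑ i : ι, ∑ k : ι, ∑ l : ι, ∑ m : ι,
          ((if i = l then (1 : ℝ) else 0) + (if k = m then (1 : ℝ) else 0) + S) := by
        gcongr with i _ k _ l _ m _
        exact hterm i k l m
    _ = 2 * (Fintype.card ι : ℝ) ^ 3 + (Fintype.card ι : ℝ) ^ 4 * S := by
        simp [Finset.sum_add_distrib, Finset.sum_ite_eq]
        ring

theorem stmt_9 {Ω : Type*} {E E' : Type u} [MeasureSpace Ω]
    (hprob : IsProbabilityMeasure (volume : Measure Ω))
    [mE : MeasurableSpace E] [mE' : MeasurableSpace E']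
    (M : ℕ) (hM : 2 ≤ M)
    (X : Fin M → Ω → E) (W : Fin M → Ω → E')
    (hXmeas : ∀ i, Measurable (X i)) (hWmeas : ∀ i, Measurable (W i))
    -- the 2M random variables X₁, …, X_M, W₁, …, W_M are mutually independent
    (hindep : iIndepFun (β := fun s : Fin M ⊕ Fin M => Sum.elim (fun _ => E) (fun _ => E') s)
      (m := fun s => Sum.rec (motive := fun s => MeasurableSpace (Sum.elim (fun _ => E) (fun _ => E') s))
        (fun _ => mE) (fun _ => mE') s)
      (fun s => Sum.rec (motive := fun s => Ω → Sum.elim (fun _ => E) (fun _ => E') s)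
        (fun i => X i) (fun j => W j) s) volume)
    -- the Xᵢ are identically distributed, and so are the Wᵢ
    (hXid : ∀ i j, IdentDistrib (X i) (X j) volume volume)
    (hWid : ∀ i j, IdentDistrib (W i) (W j) volume volume)
    (F : E × E' → ℂ) (hF : Measurable F) (hFbd : ∀ p, ‖F p‖ ≤ 1) :
    (1 / (M:ℝ) ^ 3) * ‖
        (∑ i : Fin M, ∑ k : Fin M, ∑ l : Fin M, ∑ m : Fin M,
          ∫ ω, F (X k ω, W i ω) * (starRingEnd ℂ) (F (X k ω, W l ω)) *
            F (X m ω, W l ω) * (starRingEnd ℂ) (F (X m ω, W i ω)))‖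
      ≤ 2 + (M:ℝ) * ‖
        (∫ ω, F (X ⟨0, by omega⟩ ω, W ⟨0, by omega⟩ ω) *
          (starRingEnd ℂ) (F (X ⟨0, by omega⟩ ω, W ⟨1, by omega⟩ ω)) *
          F (X ⟨1, by omega⟩ ω, W ⟨1, by omega⟩ ω) *
          (starRingEnd ℂ) (F (X ⟨1, by omega⟩ ω, W ⟨0, by omega⟩ ω)))‖ := by
  have := hprob
  set i₀ : Fin M := ⟨0, by omega⟩
  set i₁ : Fin M := ⟨1, by omega⟩
  have hlaw : ∀ k m i l, k ≠ m → i ≠ l →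
      volume.map (fun ω => ((X k ω, X m ω), (W i ω, W l ω))) =
        ((volume.map (X k)).prod (volume.map (X m))).prod
          ((volume.map (W i)).prod (volume.map (W l))) := fun k m i l hkm hil =>
    hindep.map_prodMk_prodMk_eq_prod (by rintro (k | i); exacts [hXmeas k, hWmeas i])
      (a := .inl k) (b := .inl m) (c := .inr i) (d := .inr l)
      (by simpa) (by simpa) (by simp) (by simp) (by simp) (by simp)
  have hoff : ∀ i k l m, i ≠ l → k ≠ m →
      ∫ ω, fourCycle F (X k ω) (X m ω) (W i ω) (W l ω) =
        ∫ ω, fourCycle F (X i₀ ω) (X i₁ ω) (W i₀ ω) (W i₁ ω) := by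
    intro i k l m hil hkm
    have h01 : i₀ ≠ i₁ := by simp [i₀, i₁, Fin.ext_iff]
    rw [integral_fourCycle_eq_of_map_eq_prod hF (hXmeas k) (hXmeas m) (hWmeas i) (hWmeas l)
        (hlaw k m i l hkm hil),
      integral_fourCycle_eq_of_map_eq_prod hF (hXmeas i₀) (hXmeas i₁) (hWmeas i₀) (hWmeas i₁)
        (hlaw i₀ i₁ i₀ i₁ h01 h01),
      (hXid k i₀).map_eq, (hXid m i₁).map_eq, (hWid i i₀).map_eq, (hWid l i₁).map_eq]
  have hsum := norm_sum_four_le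
    (fun i k l m => ∫ ω, fourCycle F (X k ω) (X m ω) (W i ω) (W l ω)) (norm_nonneg _)
    (fun i k l m => norm_integral_fourCycle_le_one hFbd (X k) (X m) (W i) (W l))
    (fun i k l m hil hkm => by rw [hoff i k l m hil hkm])
  simp only [fourCycle, Fintype.card_fin] at hsum
  rw [one_div_mul_eq_div, div_le_iff₀ (by positivity)]
  exact hsum.trans_eq (by ring)
end

section
/- There exists a constant K > 0 such that for every real T ≥ 1, | ∫_{[0,1]⁴} e^{−2πi T (y_b − y_a)(z_b − z_a)} dy_a dy_b dz_a dz_b | ≤ K · (1 + log T)/T. -/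
/-!
Integrating first over `z_a, z_b`, the integrand factorises and the inner double integral is
`F(c) F(-c)` with `F(c) = ∫₀¹ e^{-ict} dt` and `c = 2πT (y_b - y_a)`. Since `|F(c)| ≤ min(1, 2/|c|)`,
this is at most `8 / (4 + c²)`, a Lorentzian in `y_b` whose integral over the real line is
`4π / (2πT) = 2/T`. Hence the whole integral is at most `2/T`.
-/

open Real intervalIntegral

noncomputable def phaseIntegral (c : ℝ) : ℂ := ∫ t in (0:ℝ)..1, Complex.exp (-(Complex.I * c) * t)

lemma continuous_phaseIntegral : Continuous phaseIntegral :=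
  continuous_parametric_intervalIntegral_of_continuous' (Continuous.cexp (by fun_prop)) 0 1

lemma norm_phaseIntegral_le_one (c : ℝ) : ‖phaseIntegral c‖ ≤ 1 := by
  simpa [phaseIntegral] using norm_integral_le_of_norm_le_const (a := 0) (b := 1) (C := 1)
    (f := fun t : ℝ => Complex.exp (-(Complex.I * c) * t))
    (fun t _ => by simp [Complex.norm_exp])

lemma norm_phaseIntegral_le_two_div {c : ℝ} (hc : c ≠ 0) : ‖phaseIntegral c‖ ≤ 2 / |c| := by
  have hne : -(Complex.I * c) ≠ 0 := by simp [hc]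
  rw [phaseIntegral, integral_exp_mul_complex hne, norm_div]
  have hden : ‖-(Complex.I * (c:ℂ))‖ = |c| := by simp
  rw [hden]
  gcongr
  calc _ ≤ ‖Complex.exp (-(Complex.I * c) * 1)‖ + ‖Complex.exp (-(Complex.I * c) * 0)‖ :=
        norm_sub_le _ _
    _ = 2 := by simp [Complex.norm_exp]; norm_num

/-- `min(1, 4/c²)`, replaced by a majorant whose integral is an arctangent. -/
lemma norm_phaseIntegral_mul_neg_le (c : ℝ) :
    ‖phaseIntegral c * phaseIntegral (-c)‖ ≤ 8 / (4 + c ^ 2) := by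
  rw [norm_mul, le_div_iff₀ (by positivity)]
  rcases le_or_gt (c ^ 2) 4 with hsmall | hlarge
  · have := mul_le_one₀ (norm_phaseIntegral_le_one c) (norm_nonneg _)
      (norm_phaseIntegral_le_one (-c))
    nlinarith [mul_nonneg (norm_nonneg (phaseIntegral c)) (norm_nonneg (phaseIntegral (-c)))]
  · have hc : c ≠ 0 := by rintro rfl; norm_num at hlarge
    have hprod : ‖phaseIntegral c‖ * ‖phaseIntegral (-c)‖ ≤ 4 / c ^ 2 := by
      calc _ ≤ (2 / |c|) * (2 / |-c|) :=
            mul_le_mul (norm_phaseIntegral_le_two_div hc)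
              (norm_phaseIntegral_le_two_div (neg_ne_zero.mpr hc)) (norm_nonneg _) (by positivity)
        _ = 4 / c ^ 2 := by rw [abs_neg, div_mul_div_comm, abs_mul_abs_self]; ring
    have hc2 : 0 < c ^ 2 := by positivity
    have : 4 / c ^ 2 * (4 + c ^ 2) ≤ 8 := by
      rw [div_mul_eq_mul_div, div_le_iff₀ hc2]; nlinarith
    nlinarith [mul_nonneg (norm_nonneg (phaseIntegral c)) (norm_nonneg (phaseIntegral (-c)))]

lemma integral_integral_exp_mul_sub (c : ℝ) :
    (∫ za in (0:ℝ)..1, ∫ zb in (0:ℝ)..1,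
      Complex.exp (-(Complex.I * ((c * (zb - za) : ℝ) : ℂ)))) =
      phaseIntegral c * phaseIntegral (-c) := by
  have hsplit : ∀ za zb : ℝ, Complex.exp (-(Complex.I * ((c * (zb - za) : ℝ) : ℂ))) =
      Complex.exp (-(Complex.I * c) * zb) * Complex.exp (-(Complex.I * ((-c : ℝ) : ℂ)) * za) := by
    intro za zb
    rw [← Complex.exp_add]
    push_cast
    ring_nf
  simp_rw [hsplit, integral_mul_const, integral_const_mul]
  rfl

lemma integral_inv_one_add_sq_mul_sub_le {k : ℝ} (hk : 0 < k) (a b d : ℝ) :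
    ∫ x in a..b, (1 + (k * x - d) ^ 2)⁻¹ ≤ π / k := by
  rw [integral_comp_mul_sub (fun x => (1 + x ^ 2)⁻¹) hk.ne', integral_inv_one_add_sq,
    smul_eq_mul, inv_mul_eq_div]
  gcongr
  linarith [arctan_lt_pi_div_two (k * b - d), neg_pi_div_two_lt_arctan (k * a - d)]

lemma norm_integral_phaseIntegral_mul_neg_le {k : ℝ} (hk : 0 < k) (a : ℝ) :
    ‖∫ y in (0:ℝ)..1, phaseIntegral (k * (y - a)) * phaseIntegral (-(k * (y - a)))‖ ≤
      4 * π / k := by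
  have hcont : Continuous fun y => phaseIntegral (k * (y - a)) * phaseIntegral (-(k * (y - a))) :=
    (continuous_phaseIntegral.comp (by fun_prop)).mul (continuous_phaseIntegral.comp (by fun_prop))
  have hlorentz : ∀ y : ℝ, 8 / (4 + (k * (y - a)) ^ 2) = 2 * (1 + (k / 2 * y - k / 2 * a) ^ 2)⁻¹ := by
    intro y
    field_simp
    ring
  calc _ ≤ ∫ y in (0:ℝ)..1, ‖phaseIntegral (k * (y - a)) * phaseIntegral (-(k * (y - a)))‖ :=
        norm_integral_le_integral_norm zero_le_one
    _ ≤ ∫ y in (0:ℝ)..1, 2 * (1 + (k / 2 * y - k / 2 * a) ^ 2)⁻¹ := by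
        refine integral_mono_on zero_le_one (hcont.norm.intervalIntegrable _ _)
          (Continuous.intervalIntegrable ?_ _ _) fun y _ => ?_
        · exact continuous_const.mul ((by fun_prop : Continuous _).inv₀ fun y => by positivity)
        · exact (hlorentz y) ▸ norm_phaseIntegral_mul_neg_le _
    _ ≤ 2 * (π / (k / 2)) := by
        rw [integral_const_mul]
        gcongr
        exact integral_inv_one_add_sq_mul_sub_le (by positivity) _ _ _
    _ = 4 * π / k := by ring

theorem stmt_13 :
    ∃ K : ℝ, 0 < K ∧ ∀ T : ℝ, 1 ≤ T →
      ‖∫ ya in (0:ℝ)..1, ∫ yb in (0:ℝ)..1, ∫ za in (0:ℝ)..1, ∫ zb in (0:ℝ)..1,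
          Complex.exp (-(Complex.I * ((2 * π * T * (yb - ya) * (zb - za) : ℝ) : ℂ)))‖
        ≤ K * (1 + Real.log T) / T := by
  refine ⟨2, two_pos, fun T hT => ?_⟩
  have hT0 : 0 < T := one_pos.trans_le hT
  have hinner : ∀ ya : ℝ,
      ‖∫ yb in (0:ℝ)..1, ∫ za in (0:ℝ)..1, ∫ zb in (0:ℝ)..1,
        Complex.exp (-(Complex.I * ((2 * π * T * (yb - ya) * (zb - za) : ℝ) : ℂ)))‖ ≤ 2 / T := by
    intro ya
    simp_rw [integral_integral_exp_mul_sub]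
    calc _ ≤ 4 * π / (2 * π * T) := norm_integral_phaseIntegral_mul_neg_le (by positivity) ya
      _ = 2 / T := by field_simp; ring
  calc _ ≤ 2 / T * |(1:ℝ) - 0| := norm_integral_le_of_norm_le_const fun ya _ => hinner ya
    _ = 2 * 1 / T := by norm_num
    _ ≤ 2 * (1 + Real.log T) / T := by
        gcongr
        linarith [Real.log_nonneg hT]
end

section
/- There exists a constant K₇ > 0 such that the following holds. For all A_c ≥ 1 and d with √A_c ≤ d ≤ A_c, all x_a, x_b, y_a, y_b ∈ [0,1] with |y_b − y_a| ≥ (√A_c/d)·|x_b − x_a|, and all (w, z) ∈ [0,1]², the partial derivative of g_{a,b} with respect to z satisfies | ∂g_{a,b}/∂z (w, z) | ≥ K₇ · (A_c/d) · ( |y_b − y_a| − (√A_c/d)·|x_b − x_a| ). -/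
open Real Set

/-- The phase difference `‖x_a − w‖ − ‖x_b − w‖` in the normalized coordinates of the paper:
the transmit points are `(−√A_c·x, √A_c·y)` and the receive point is `(d + √A_c·w, √A_c·z)`. -/
noncomputable def gab (Ac d xa xb ya yb w z : ℝ) : ℝ :=
  Real.sqrt ((d + Real.sqrt Ac * (xa + w)) ^ 2 + Ac * (ya - z) ^ 2) -
    Real.sqrt ((d + Real.sqrt Ac * (xb + w)) ^ 2 + Ac * (yb - z) ^ 2)

/-!
Each term of `∂g/∂z` has the form `A·p/√(C² + A·p²) = √A · sin (arctan (√A·p/C))` with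
`p = y − z ∈ [-1, 1]` and `C = d + √A·(x + w) ∈ [d, 3d]`, so the argument of `sin ∘ arctan`
lies in `[-1, 1]`, where this function has slope at least `1/3`. The two arguments differ by at
least `√A·(|Δy| − |ΔC|/d)/C` and `|ΔC| = √A·|Δx|`; with `C ≤ 3d` this gives `K₇ = 1/9`.
-/

theorem sin_arctan_sub_ge {a b : ℝ} (ha : -1 ≤ a) (hab : a ≤ b) (hb : b ≤ 1) :
    (b - a) / 3 ≤ sin (arctan b) - sin (arctan a) := by
  have hderiv (t : ℝ) :
      HasDerivAt (fun s => sin (arctan s)) (cos (arctan t) * (1 / (1 + t ^ 2))) t :=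
    (hasDerivAt_arctan t).sin
  have hslope : ∀ t ∈ interior (Icc (-1 : ℝ) 1), 1 / 3 ≤ deriv (fun s => sin (arctan s)) t := by
    rw [interior_Icc]
    rintro t ⟨ht₁, ht₂⟩
    have hsqrt : √(1 + t ^ 2) ≤ 3 / 2 := by
      rw [Real.sqrt_le_left (by norm_num)]
      nlinarith
    rw [(hderiv t).deriv, cos_arctan, div_mul_div_comm, one_mul,
      div_le_div_iff₀ (by norm_num) (by positivity)]
    nlinarith [Real.sqrt_nonneg (1 + t ^ 2)]
  have := (convex_Icc (-1 : ℝ) 1).mul_sub_le_image_sub_of_le_deriv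
    (fun t _ => (hderiv t).continuousAt.continuousWithinAt)
    (fun t _ => (hderiv t).differentiableAt.differentiableWithinAt) hslope
    a ⟨ha, hab.trans hb⟩ b ⟨ha.trans hab, hb⟩ hab
  linarith

theorem mul_div_sqrt_eq_sqrt_mul_sin_arctan {A u p : ℝ} (hA : 0 ≤ A) (hu : 0 < u) :
    A * p / √(u ^ 2 + A * p ^ 2) = √A * sin (arctan (√A * p / u)) := by
  have hA' : √A ^ 2 = A := sq_sqrt hA
  have h : 1 + (√A * p / u) ^ 2 = (u ^ 2 + A * p ^ 2) / u ^ 2 := by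
    field_simp
    rw [hA']; ring
  have hr : 0 < √(u ^ 2 + A * p ^ 2) := sqrt_pos.mpr (by positivity)
  rw [sin_arctan, h, sqrt_div' _ (by positivity), sqrt_sq hu.le]
  field_simp
  rw [hA']
  ring

theorem div_sub_div_ge {d u v p q : ℝ} (hd : 0 < d) (hu : d ≤ u) (hv : 0 < v) (hp : |p| ≤ 1) :
    ((q - p) - |v - u| / d) / v ≤ q / v - p / u := by
  have hu0 : 0 < u := hd.trans_le hu
  have hsplit : q / v - p / u = (q - p) / v + p * (u - v) / (u * v) := by
    field_simp; ring
  have hcross : |p * (u - v)| / (u * v) ≤ |v - u| / d / v := by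
    rw [abs_mul, abs_sub_comm, div_div, div_le_div_iff₀ (by positivity) (by positivity)]
    have : |p| * |v - u| ≤ |v - u| := mul_le_of_le_one_left (abs_nonneg _) hp
    have hdv : d * v ≤ u * v := mul_le_mul_of_nonneg_right hu hv.le
    nlinarith [abs_nonneg (v - u), mul_le_mul_of_nonneg_right this (by positivity : 0 ≤ d * v)]
  have hlow := neg_abs_le (p * (u - v) / (u * v))
  rw [abs_div, abs_of_pos (by positivity : 0 < u * v)] at hlow
  rw [hsplit, sub_div]
  linarith

theorem sub_mul_div_sqrt_ge {A d u v p q : ℝ} (hA : 0 ≤ A) (hd : 0 < d) (hAd : √A ≤ d)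
    (hu : d ≤ u) (hv : d ≤ v) (hv3 : v ≤ 3 * d) (hp : |p| ≤ 1) (hq : |q| ≤ 1)
    (hsep : |v - u| / d ≤ q - p) :
    1 / 9 * (A / d) * ((q - p) - |v - u| / d) ≤
      A * q / √(v ^ 2 + A * q ^ 2) - A * p / √(u ^ 2 + A * p ^ 2) := by
  set X := (q - p) - |v - u| / d
  have hX : 0 ≤ X := sub_nonneg.mpr hsep
  have hv0 : 0 < v := hd.trans_le hv
  have hunit : ∀ r c, |r| ≤ 1 → d ≤ c → |√A * r / c| ≤ 1 := by
    intro r c hr hc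
    rw [abs_div, abs_mul, abs_of_nonneg (sqrt_nonneg A), abs_of_pos (hd.trans_le hc),
      div_le_one (hd.trans_le hc)]
    nlinarith [sqrt_nonneg A]
  set ta := √A * p / u
  set tb := √A * q / v
  have hgap : √A * X / v ≤ tb - ta :=
    calc √A * X / v = √A * (X / v) := mul_div_assoc _ _ _
      _ ≤ √A * (q / v - p / u) := by gcongr; exact div_sub_div_ge hd hu hv0 hp
      _ = tb - ta := by ring
  have hta := hunit p u hp hu
  have htb := hunit q v hq hv
  have hmono := sin_arctan_sub_ge (abs_le.mp hta).1
    (by linarith [div_nonneg (mul_nonneg (sqrt_nonneg A) hX) hv0.le]) (abs_le.mp htb).2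
  have hsq : √A * √A = A := mul_self_sqrt hA
  calc 1 / 9 * (A / d) * X = A * X / (9 * d) := by ring
    _ ≤ A * X / (3 * v) :=
        div_le_div_of_nonneg_left (mul_nonneg hA hX) (by positivity) (by linarith)
    _ = √A * (√A * X / v / 3) := by linear_combination (-X / (3 * v)) * hsq
    _ ≤ √A * ((tb - ta) / 3) := by gcongr
    _ ≤ √A * (sin (arctan tb) - sin (arctan ta)) := by gcongr
    _ = A * q / √(v ^ 2 + A * q ^ 2) - A * p / √(u ^ 2 + A * p ^ 2) := by
        rw [mul_div_sqrt_eq_sqrt_mul_sin_arctan hA (hd.trans_le hu),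
          mul_div_sqrt_eq_sqrt_mul_sin_arctan hA hv0]
        ring

theorem abs_sub_mul_div_sqrt_ge {A d u v p q : ℝ} (hA : 0 ≤ A) (hd : 0 < d) (hAd : √A ≤ d)
    (hu : d ≤ u) (hu3 : u ≤ 3 * d) (hv : d ≤ v) (hv3 : v ≤ 3 * d) (hp : |p| ≤ 1) (hq : |q| ≤ 1)
    (hsep : |v - u| / d ≤ |q - p|) :
    1 / 9 * (A / d) * (|q - p| - |v - u| / d) ≤
      |A * q / √(v ^ 2 + A * q ^ 2) - A * p / √(u ^ 2 + A * p ^ 2)| := by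
  rcases le_total p q with hpq | hqp
  · rw [abs_of_nonneg (sub_nonneg.mpr hpq)] at hsep ⊢
    exact (sub_mul_div_sqrt_ge hA hd hAd hu hv hv3 hp hq hsep).trans (le_abs_self _)
  · rw [abs_of_nonpos (sub_nonpos.mpr hqp), neg_sub, abs_sub_comm v u] at hsep ⊢
    rw [abs_sub_comm (A * q / _)]
    exact (sub_mul_div_sqrt_ge hA hd hAd hv hu hu3 hq hp hsep).trans (le_abs_self _)

theorem hasDerivAt_sqrt_sq_add_mul_sq {A C : ℝ} (y z : ℝ) (hA : 0 ≤ A) (hC : C ≠ 0) :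
    HasDerivAt (fun t => √(C ^ 2 + A * (y - t) ^ 2))
      (-(A * (y - z) / √(C ^ 2 + A * (y - z) ^ 2))) z := by
  have hpos : 0 < C ^ 2 + A * (y - z) ^ 2 := by positivity
  have hinner : HasDerivAt (fun t => C ^ 2 + A * (y - t) ^ 2) (-(2 * A * (y - z))) z :=
    ((((hasDerivAt_id' z).const_sub y).fun_pow 2).const_mul A |>.const_add (C ^ 2)).congr_deriv
      (by ring)
  convert hinner.sqrt hpos.ne' using 1
  field_simp

theorem hasDerivAt_gab {Ac d xa xb ya yb w : ℝ} (z : ℝ) (hAc : 0 ≤ Ac)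
    (ha : d + √Ac * (xa + w) ≠ 0) (hb : d + √Ac * (xb + w) ≠ 0) :
    HasDerivAt (fun t => gab Ac d xa xb ya yb w t)
      (Ac * (yb - z) / √((d + √Ac * (xb + w)) ^ 2 + Ac * (yb - z) ^ 2) -
        Ac * (ya - z) / √((d + √Ac * (xa + w)) ^ 2 + Ac * (ya - z) ^ 2)) z := by
  refine ((hasDerivAt_sqrt_sq_add_mul_sq ya z hAc ha).sub
    (hasDerivAt_sqrt_sq_add_mul_sq yb z hAc hb)).congr_deriv ?_
  ring

theorem stmt_15 :
    ∃ K₇ : ℝ, 0 < K₇ ∧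
      ∀ Ac d : ℝ, 1 ≤ Ac → Real.sqrt Ac ≤ d → d ≤ Ac →
      ∀ xa ∈ Set.Icc (0:ℝ) 1, ∀ xb ∈ Set.Icc (0:ℝ) 1,
      ∀ ya ∈ Set.Icc (0:ℝ) 1, ∀ yb ∈ Set.Icc (0:ℝ) 1,
      Real.sqrt Ac / d * |xb - xa| ≤ |yb - ya| →
      ∀ w ∈ Set.Icc (0:ℝ) 1, ∀ z ∈ Set.Icc (0:ℝ) 1,
        K₇ * (Ac / d) * (|yb - ya| - Real.sqrt Ac / d * |xb - xa|) ≤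
          |deriv (fun t => gab Ac d xa xb ya yb w t) z| := by
  refine ⟨1 / 9, by norm_num, ?_⟩
  intro Ac d hAc hAd _ xa hxa xb hxb ya hya yb hyb hsep w hw z hz
  have hA : 0 ≤ Ac := by linarith
  have hd : 0 < d := (sqrt_pos.mpr (by linarith)).trans_le hAd
  have hC : ∀ x ∈ Icc (0 : ℝ) 1, d ≤ d + √Ac * (x + w) ∧ d + √Ac * (x + w) ≤ 3 * d := by
    rintro x ⟨hx0, hx1⟩
    constructor <;> nlinarith [sqrt_nonneg Ac, hw.1, hw.2]
  have hy : ∀ y ∈ Icc (0 : ℝ) 1, |y - z| ≤ 1 := fun y hy =>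
    abs_le.mpr ⟨by linarith [hy.1, hz.2], by linarith [hy.2, hz.1]⟩
  have hgap : |(d + √Ac * (xb + w)) - (d + √Ac * (xa + w))| / d = √Ac / d * |xb - xa| := by
    rw [show (d + √Ac * (xb + w)) - (d + √Ac * (xa + w)) = √Ac * (xb - xa) by ring, abs_mul,
      abs_of_nonneg (sqrt_nonneg Ac)]
    ring
  rw [(hasDerivAt_gab z hA (hd.trans_le (hC xa hxa).1).ne' (hd.trans_le (hC xb hxb).1).ne').deriv,
    ← hgap, show yb - ya = (yb - z) - (ya - z) by ring]
  rw [← hgap, show yb - ya = (yb - z) - (ya - z) by ring] at hsep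
  exact abs_sub_mul_div_sqrt_ge hA hd hAd (hC xa hxa).1 (hC xa hxa).2 (hC xb hxb).1 (hC xb hxb).2
    (hy ya hya) (hy yb hyb) hsep
end

section
/- There exists a constant K₈ > 0 such that the following holds. For all A_c ≥ 1 and d with √A_c ≤ d ≤ A_c, and all x_a, x_b, y_a, y_b ∈ [0,1] with |y_b − y_a| > (√A_c/d)·|x_b − x_a|, one has | ∫₀¹ ∫₀¹ e^{2πi g_{a,b}(w,z)} / G_{a,b}(w,z) dw dz | ≤ K₈ · (d/A_c) / ( |y_b − y_a| − (√A_c/d)·|x_b − x_a| ). -/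
open Real Set

/-- The normalized product of distances `‖x_a − w‖·‖x_b − w‖/d²` in the same coordinates. -/
noncomputable def Gab (Ac d xa xb ya yb w z : ℝ) : ℝ :=
  d⁻¹ ^ 2 * Real.sqrt ((d + Real.sqrt Ac * (xa + w)) ^ 2 + Ac * (ya - z) ^ 2) *
    Real.sqrt ((d + Real.sqrt Ac * (xb + w)) ^ 2 + Ac * (yb - z) ^ 2)

/-!
Fix `w`. With `r_a, r_b` the two distances in `gab`, the inner integrand is `e^{iφ} d² / (r_a r_b)`
with phase `φ = 2π (r_a - r_b)`, and `φ' = 2π A N / (r_a r_b)` where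
`N = (z - y_a) r_b - (z - y_b) r_a`. So the amplitude is `φ' u` with `u = d² / (2π A N)`, and an
integration by parts bounds the integral by `|u 0| + |u 1| + ∫ |u'|`.

Two facts about `N` finish the proof. First, `N ((z - y_a) r_b + (z - y_b) r_a)` equals
`((z - y_a) Q - (z - y_b) P) ((z - y_a) Q + (z - y_b) P)`, where `P, Q` are the horizontal offsets;
with `P ≤ r_a ≤ 2P`, `Q ≤ r_b ≤ 2Q` this gives `2 |N| ≥ |(z - y_a) Q - (z - y_b) P|` when
`z - y_a`, `z - y_b` have the same sign (otherwise even `|N| ≥` holds termwise), and the right side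
is at least `d |y_b - y_a| - √A |x_b - x_a|`.
Second, `N'` has the sign of `r_b - r_a`, and `r_b² - r_a²` is affine in `z`; so `u` is monotone
on each of two pieces of `[0, 1]` and `∫ |u'| ≤ 4 sup |u|`. Altogether the inner integral is at
most `6 d² / (π A (d |y_b - y_a| - √A |x_b - x_a|))` uniformly in `w`, whence `K₈ = 6 / π`.
-/

open MeasureTheory

section Oscillatory

open Complex

theorem hasDerivAt_neg_I_mul_exp_mul {φ u : ℝ → ℝ} {φ' u' t : ℝ} (hφ : HasDerivAt φ φ' t)
    (hu : HasDerivAt u u' t) :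
    HasDerivAt (fun t => -I * exp (I * φ t) * u t)
      (exp (I * φ t) * ((φ' * u t : ℝ) : ℂ) + -I * (exp (I * φ t) * u')) t := by
  refine (((hφ.ofReal_comp.const_mul I).cexp.const_mul (-I)).mul hu.ofReal_comp).congr_deriv ?_
  push_cast
  linear_combination -(exp (I * φ t) * φ' * u t) * I_sq

theorem norm_integral_exp_mul_deriv_mul_le_s17 {φ φ' u u' : ℝ → ℝ} {a b : ℝ} (hab : a ≤ b)
    (hφ : ∀ t ∈ Icc a b, HasDerivAt φ (φ' t) t) (hu : ∀ t ∈ Icc a b, HasDerivAt u (u' t) t)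
    (hφ' : ContinuousOn φ' (Icc a b)) (hu' : ContinuousOn u' (Icc a b)) :
    ‖∫ t in a..b, exp (I * φ t) * ((φ' t * u t : ℝ) : ℂ)‖ ≤
      |u a| + |u b| + ∫ t in a..b, |u' t| := by
  have hIcc : uIcc a b = Icc a b := uIcc_of_le hab
  have hexp : ContinuousOn (fun t => exp (I * φ t)) (Icc a b) :=
    (continuous_exp.comp_continuousOn
      (continuousOn_const.mul (continuous_ofReal.comp_continuousOn
        (HasDerivAt.continuousOn hφ))))
  have hF : IntervalIntegrable (fun t => exp (I * φ t) * ((φ' t * u t : ℝ) : ℂ)) volume a b := by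
    refine ContinuousOn.intervalIntegrable ?_
    rw [hIcc]
    exact hexp.mul (continuous_ofReal.comp_continuousOn (hφ'.mul (HasDerivAt.continuousOn hu)))
  have hE : IntervalIntegrable (fun t => exp (I * φ t) * (u' t : ℂ)) volume a b := by
    refine ContinuousOn.intervalIntegrable ?_
    rw [hIcc]
    exact hexp.mul (continuous_ofReal.comp_continuousOn hu')
  have hparts : ∫ t in a..b, (exp (I * φ t) * ((φ' t * u t : ℝ) : ℂ) +
      -I * (exp (I * φ t) * (u' t : ℂ))) =
      -I * exp (I * φ b) * u b - -I * exp (I * φ a) * u a :=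
    intervalIntegral.integral_eq_sub_of_hasDerivAt
      (fun t ht => hasDerivAt_neg_I_mul_exp_mul (hφ t (hIcc ▸ ht)) (hu t (hIcc ▸ ht)))
      (hF.add (hE.const_mul _))
  rw [intervalIntegral.integral_add hF (hE.const_mul _), intervalIntegral.integral_const_mul]
    at hparts
  rw [eq_sub_of_add_eq hparts]
  have hnorm : ∀ t, ‖exp (I * φ t) * (u' t : ℂ)‖ = |u' t| := fun t => by
    rw [norm_mul, norm_exp_I_mul_ofReal, one_mul, norm_real, Real.norm_eq_abs]
  calc ‖-I * exp (I * φ b) * u b - -I * exp (I * φ a) * u a -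
        -I * ∫ t in a..b, exp (I * φ t) * (u' t : ℂ)‖
      ≤ ‖-I * exp (I * φ b) * u b‖ + ‖-I * exp (I * φ a) * u a‖ +
          ‖-I * ∫ t in a..b, exp (I * φ t) * (u' t : ℂ)‖ :=
        norm_sub_le_of_le (norm_sub_le _ _) le_rfl
    _ ≤ |u b| + |u a| + ∫ t in a..b, |u' t| := by
      simp only [norm_mul, norm_neg, norm_I, norm_exp_I_mul_ofReal, norm_real, Real.norm_eq_abs,
        one_mul]
      gcongr
      exact (intervalIntegral.norm_integral_le_integral_norm hab).trans_eq
        (intervalIntegral.integral_congr fun t _ => hnorm t)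
    _ = |u a| + |u b| + ∫ t in a..b, |u' t| := by ring

theorem integral_abs_deriv_le_of_sign_change {u u' : ℝ → ℝ} {a b m B : ℝ} (hab : a ≤ b)
    (hu : ∀ t ∈ Icc a b, HasDerivAt u (u' t) t) (hu' : ContinuousOn u' (Icc a b))
    (hsign : ∀ t ∈ Icc a b, 0 ≤ u' t * (t - m))
    (hB : ∀ t ∈ Icc a b, |u t| ≤ B) :
    ∫ t in a..b, |u' t| ≤ 4 * B := by
  set c := max a (min b m)
  have hc : c ∈ Icc a b := ⟨le_max_left _ _, max_le hab (min_le_left _ _)⟩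
  have hint : ∀ s ∈ Icc a b, ∀ t ∈ Icc a b, IntervalIntegrable (fun t => |u' t|) volume s t :=
    fun s hs t ht => (hu'.abs.mono (uIcc_subset_Icc hs ht)).intervalIntegrable
  have hcont : ContinuousOn u (Icc a b) := HasDerivAt.continuousOn hu
  have hleft : ∫ t in a..c, |u' t| = u a - u c := by
    rw [intervalIntegral.integral_eq_sub_of_hasDerivAt_of_le (f := fun t => -u t) hc.1
      (hcont.neg.mono (Icc_subset_Icc le_rfl hc.2)) (fun t ht => ?_)
      (hint a (left_mem_Icc.mpr hab) c hc)]
    · ring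
    have htm : t < m := (lt_min_iff.mp ((lt_max_iff.mp ht.2).resolve_left ht.1.not_gt)).2
    have ht' : t ∈ Icc a b := ⟨ht.1.le, ht.2.le.trans hc.2⟩
    rw [abs_of_nonpos (nonpos_of_mul_nonneg_left (hsign t ht') (sub_neg.mpr htm))]
    exact (hu t ht').neg
  have hright : ∫ t in c..b, |u' t| = u b - u c := by
    refine intervalIntegral.integral_eq_sub_of_hasDerivAt_of_le hc.2
      (hcont.mono (Icc_subset_Icc hc.1 le_rfl)) (fun t ht => ?_)
      (hint c hc b (right_mem_Icc.mpr hab))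
    have hmt : m < t := (min_lt_iff.mp ((max_lt_iff.mp ht.1).2)).resolve_left ht.2.not_gt
    have ht' : t ∈ Icc a b := ⟨hc.1.trans ht.1.le, ht.2.le⟩
    rw [abs_of_nonneg (nonneg_of_mul_nonneg_left (hsign t ht') (sub_pos.mpr hmt))]
    exact hu t ht'
  rw [← intervalIntegral.integral_add_adjacent_intervals (hint a (left_mem_Icc.mpr hab) c hc)
    (hint c hc b (right_mem_Icc.mpr hab)), hleft, hright]
  have ha := abs_le.mp (hB a (left_mem_Icc.mpr hab))
  have hb := abs_le.mp (hB b (right_mem_Icc.mpr hab))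
  have hc' := abs_le.mp (hB c hc)
  linarith [ha.1, hb.2, hc'.1]

theorem norm_integral_exp_mul_deriv_mul_le_of_sign_change {φ φ' u u' : ℝ → ℝ} {a b m B : ℝ}
    (hab : a ≤ b) (hφ : ∀ t ∈ Icc a b, HasDerivAt φ (φ' t) t)
    (hu : ∀ t ∈ Icc a b, HasDerivAt u (u' t) t) (hφ' : ContinuousOn φ' (Icc a b))
    (hu' : ContinuousOn u' (Icc a b))
    (hsign : (∀ t ∈ Icc a b, 0 ≤ u' t * (t - m)) ∨ ∀ t ∈ Icc a b, u' t * (t - m) ≤ 0)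
    (hB : ∀ t ∈ Icc a b, |u t| ≤ B) :
    ‖∫ t in a..b, exp (I * φ t) * ((φ' t * u t : ℝ) : ℂ)‖ ≤ 6 * B := by
  have hvar : ∫ t in a..b, |u' t| ≤ 4 * B := by
    rcases hsign with hsign | hsign
    · exact integral_abs_deriv_le_of_sign_change hab hu hu' hsign hB
    · simpa using integral_abs_deriv_le_of_sign_change (u := fun t => -u t) (u' := fun t => -u' t)
        hab (fun t ht => (hu t ht).neg) hu'.neg (fun t ht => by simpa using hsign t ht)
        (by simpa using hB)
  have ha := hB a (left_mem_Icc.mpr hab)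
  have hb := hB b (right_mem_Icc.mpr hab)
  linarith [norm_integral_exp_mul_deriv_mul_le_s17 hab hφ hu hφ' hu']

end Oscillatory

/-- The distance from `(0, √A y)` to `(P, √A z)`; `gab` is a difference of two such distances. -/
noncomputable def rdist (A P y z : ℝ) : ℝ := √(P ^ 2 + A * (y - z) ^ 2)

theorem rdist_nonneg (A P y z : ℝ) : 0 ≤ rdist A P y z :=
  sqrt_nonneg _

section rdist

variable {A P : ℝ}

theorem rdist_sq (hA : 0 ≤ A) (y z : ℝ) : rdist A P y z ^ 2 = P ^ 2 + A * (y - z) ^ 2 :=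
  sq_sqrt (by positivity)

theorem le_rdist (hA : 0 ≤ A) (y z : ℝ) : P ≤ rdist A P y z :=
  le_sqrt_of_sq_le (by nlinarith [mul_nonneg hA (sq_nonneg (y - z))])

theorem rdist_le_two_mul (hP : 0 ≤ P) {y z : ℝ} (h : A * (y - z) ^ 2 ≤ 3 * P ^ 2) :
    rdist A P y z ≤ 2 * P :=
  sqrt_le_iff.mpr ⟨by positivity, by linarith⟩

theorem rdist_pos (hA : 0 ≤ A) (hP : P ≠ 0) (y z : ℝ) : 0 < rdist A P y z :=
  sqrt_pos.mpr (add_pos_of_pos_of_nonneg (pow_two_pos_of_ne_zero hP) (by positivity))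

@[fun_prop]
theorem continuous_rdist (A P y : ℝ) : Continuous (rdist A P y) := by
  unfold rdist; fun_prop

theorem hasDerivAt_rdist (hA : 0 ≤ A) (hP : P ≠ 0) (y z : ℝ) :
    HasDerivAt (rdist A P y) (A * (z - y) / rdist A P y z) z := by
  have h := (((hasDerivAt_id' z).const_sub y).fun_pow 2 |>.const_mul A |>.const_add (P ^ 2)).sqrt
    (sqrt_pos.mp (rdist_pos hA hP y z)).ne'
  refine h.congr_deriv ?_
  rw [rdist]
  field_simp
  ring

theorem mul_le_rdist_mul_rdist (hA : 0 ≤ A) (Q ya yb z : ℝ) :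
    A * (z - ya) * (z - yb) ≤ rdist A P ya z * rdist A Q yb z := by
  rw [rdist, rdist, ← sqrt_mul (by positivity)]
  refine le_sqrt_of_sq_le ?_
  nlinarith [mul_nonneg hA (mul_nonneg (sq_nonneg P) (sq_nonneg (yb - z))),
    mul_nonneg hA (mul_nonneg (sq_nonneg Q) (sq_nonneg (ya - z))),
    mul_nonneg (sq_nonneg P) (sq_nonneg Q)]

end rdist

theorem abs_mul_sub_mul_le_two_mul_abs_of_nonneg {A α β P Q r s : ℝ} (hα : 0 ≤ α) (hβ : 0 ≤ β)
    (hP : 0 ≤ P) (hQ : 0 ≤ Q) (hPr : P ≤ r) (hr : r ≤ 2 * P) (hQs : Q ≤ s) (hs : s ≤ 2 * Q)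
    (hr2 : r ^ 2 = P ^ 2 + A * α ^ 2) (hs2 : s ^ 2 = Q ^ 2 + A * β ^ 2) :
    |α * Q - β * P| ≤ 2 * |α * s - β * r| := by
  have hαQ : 0 ≤ α * Q := mul_nonneg hα hQ
  have hβP : 0 ≤ β * P := mul_nonneg hβ hP
  rcases (add_nonneg hαQ hβP).eq_or_lt with hS | hS
  · have hX : α * Q - β * P = 0 := by linarith
    rw [hX, abs_zero]
    positivity
  have hT : α * s + β * r ≤ 2 * (α * Q + β * P) := by
    nlinarith [mul_le_mul_of_nonneg_left hs hα, mul_le_mul_of_nonneg_left hr hβ]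
  have hT0 : 0 < α * s + β * r := by
    nlinarith [mul_le_mul_of_nonneg_left hQs hα, mul_le_mul_of_nonneg_left hPr hβ]
  -- `s² - A β² = Q²` and `r² - A α² = P²` make `(α s)² - (β r)² = (α Q)² - (β P)²`
  have key : (α * s - β * r) * (α * s + β * r) = (α * Q - β * P) * (α * Q + β * P) := by
    linear_combination α ^ 2 * hs2 - β ^ 2 * hr2
  replace key := congrArg abs key
  rw [abs_mul, abs_mul, abs_of_pos hT0, abs_of_pos hS] at key
  refine le_of_mul_le_mul_right ?_ hS
  nlinarith [abs_nonneg (α * s - β * r)]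

theorem abs_mul_sub_mul_le_two_mul_abs {A α β P Q r s : ℝ} (hP : 0 ≤ P) (hQ : 0 ≤ Q)
    (hPr : P ≤ r) (hr : r ≤ 2 * P) (hQs : Q ≤ s) (hs : s ≤ 2 * Q)
    (hr2 : r ^ 2 = P ^ 2 + A * α ^ 2) (hs2 : s ^ 2 = Q ^ 2 + A * β ^ 2) :
    |α * Q - β * P| ≤ 2 * |α * s - β * r| := by
  rcases le_total 0 α with hα | hα <;> rcases le_total 0 β with hβ | hβ
  · exact abs_mul_sub_mul_le_two_mul_abs_of_nonneg hα hβ hP hQ hPr hr hQs hs hr2 hs2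
  · have h : α * Q - β * P ≤ α * s - β * r := by
      nlinarith [mul_le_mul_of_nonneg_left hQs hα, mul_le_mul_of_nonpos_left hPr hβ]
    rw [abs_of_nonneg (by nlinarith : 0 ≤ α * Q - β * P)]
    linarith [le_abs_self (α * s - β * r), abs_nonneg (α * s - β * r)]
  · have h : α * s - β * r ≤ α * Q - β * P := by
      nlinarith [mul_le_mul_of_nonpos_left hQs hα, mul_le_mul_of_nonneg_left hPr hβ]
    rw [abs_of_nonpos (by nlinarith : α * Q - β * P ≤ 0)]
    linarith [neg_abs_le (α * s - β * r), abs_nonneg (α * s - β * r)]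
  · have h := abs_mul_sub_mul_le_two_mul_abs_of_nonneg (A := A) (neg_nonneg.mpr hα)
      (neg_nonneg.mpr hβ) hP hQ hPr hr hQs hs (by rw [hr2]; ring) (by rw [hs2]; ring)
    rwa [show -α * Q - -β * P = -(α * Q - β * P) by ring,
      show -α * s - -β * r = -(α * s - β * r) by ring, abs_neg, abs_neg] at h

noncomputable def phaseNumer (A P Q ya yb z : ℝ) : ℝ :=
  (z - ya) * rdist A Q yb z - (z - yb) * rdist A P ya z

noncomputable def phaseNumerDeriv (A P Q ya yb z : ℝ) : ℝ :=
  (rdist A Q yb z - rdist A P ya z) *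
    (1 - A * (z - ya) * (z - yb) / (rdist A P ya z * rdist A Q yb z))

section phaseNumer

variable {A P Q ya yb : ℝ}

@[fun_prop]
theorem continuous_phaseNumer (A P Q ya yb : ℝ) : Continuous (phaseNumer A P Q ya yb) := by
  unfold phaseNumer; fun_prop

theorem sub_abs_le_two_mul_abs_phaseNumer {d : ℝ} (hA : 0 ≤ A) (hd : 0 ≤ d) (hAd : A ≤ d ^ 2)
    (hP : d ≤ P) (hQ : d ≤ Q) (hya : ya ∈ Icc 0 1) (hyb : yb ∈ Icc 0 1) {z : ℝ}
    (hz : z ∈ Icc 0 1) :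
    d * |yb - ya| - |Q - P| ≤ 2 * |phaseNumer A P Q ya yb z| := by
  have hsq : ∀ y ∈ Icc (0 : ℝ) 1, A * (y - z) ^ 2 ≤ 3 * d ^ 2 := fun y hy => by
    nlinarith [hy.1, hy.2, hz.1, hz.2, mul_le_mul_of_nonneg_left
      (show (y - z) ^ 2 ≤ 1 by nlinarith [hy.1, hy.2, hz.1, hz.2]) hA]
  have hX := abs_mul_sub_mul_le_two_mul_abs (A := A) (α := z - ya) (β := z - yb)
    (hd.trans hP) (hd.trans hQ) (le_rdist hA ya z)
    (rdist_le_two_mul (hd.trans hP) ((hsq ya hya).trans (by nlinarith)))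
    (le_rdist hA yb z) (rdist_le_two_mul (hd.trans hQ) ((hsq yb hyb).trans (by nlinarith)))
    (by rw [rdist_sq hA]; ring) (by rw [rdist_sq hA]; ring)
  have hβ : |z - yb| ≤ 1 := abs_le.mpr ⟨by linarith [hz.1, hyb.2], by linarith [hz.2, hyb.1]⟩
  have hsplit : (z - ya) * Q - (z - yb) * P = (yb - ya) * Q + (z - yb) * (Q - P) := by ring
  calc d * |yb - ya| - |Q - P|
      ≤ |yb - ya| * Q - |z - yb| * |Q - P| := by
        nlinarith [mul_le_mul_of_nonneg_left hQ (abs_nonneg (yb - ya)),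
          mul_le_mul_of_nonneg_right hβ (abs_nonneg (Q - P))]
    _ = |(yb - ya) * Q| - |(z - yb) * (Q - P)| := by
        rw [abs_mul, abs_mul, abs_of_nonneg (hd.trans hQ)]
    _ ≤ |(z - ya) * Q - (z - yb) * P| := by rw [hsplit]; exact abs_sub_abs_le_abs_add _ _
    _ ≤ 2 * |phaseNumer A P Q ya yb z| := hX

theorem hasDerivAt_rdist_sub_rdist (hA : 0 ≤ A) (hP : P ≠ 0) (hQ : Q ≠ 0) (z : ℝ) :
    HasDerivAt (fun t => rdist A P ya t - rdist A Q yb t)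
      (A * phaseNumer A P Q ya yb z / (rdist A P ya z * rdist A Q yb z)) z := by
  refine ((hasDerivAt_rdist hA hP ya z).sub (hasDerivAt_rdist hA hQ yb z)).congr_deriv ?_
  have := (rdist_pos hA hP ya z).ne'
  have := (rdist_pos hA hQ yb z).ne'
  rw [phaseNumer]
  field_simp

theorem hasDerivAt_phaseNumer (hA : 0 ≤ A) (hP : P ≠ 0) (hQ : Q ≠ 0) (z : ℝ) :
    HasDerivAt (phaseNumer A P Q ya yb) (phaseNumerDeriv A P Q ya yb z) z := by
  have h := (((hasDerivAt_id' z).sub_const ya).mul (hasDerivAt_rdist hA hQ yb z)).sub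
    (((hasDerivAt_id' z).sub_const yb).mul (hasDerivAt_rdist hA hP ya z))
  refine h.congr_deriv ?_
  have := (rdist_pos hA hP ya z).ne'
  have := (rdist_pos hA hQ yb z).ne'
  rw [phaseNumerDeriv]
  field_simp
  ring

theorem continuous_phaseNumerDeriv (hA : 0 ≤ A) (hP : P ≠ 0) (hQ : Q ≠ 0) :
    Continuous (phaseNumerDeriv A P Q ya yb) := by
  unfold phaseNumerDeriv
  fun_prop (disch := intros; exact mul_ne_zero (rdist_pos hA hP _ _).ne' (rdist_pos hA hQ _ _).ne')

/-- `rdist A Q yb z ^ 2 - rdist A P ya z ^ 2` is affine in `z` with slope `-2 A (yb - ya)`. -/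
theorem exists_sign_change_rdist_sub_rdist (hA : 0 < A) (hy : ya ≠ yb) :
    ∃ m, ∀ z, (yb - ya) * ((rdist A Q yb z - rdist A P ya z) * (z - m)) ≤ 0 := by
  set m := (Q ^ 2 - P ^ 2) / (2 * A * (yb - ya)) + (ya + yb) / 2
  refine ⟨m, fun z => nonpos_of_mul_nonpos_right (a := 2 * A) ?_ (by positivity)⟩
  have hsq : 2 * A * ((yb - ya) * (z - m)) = rdist A P ya z ^ 2 - rdist A Q yb z ^ 2 := by
    rw [rdist_sq hA.le, rdist_sq hA.le]
    simp only [m]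
    field_simp [sub_ne_zero.mpr hy.symm]
    ring
  calc 2 * A * ((yb - ya) * ((rdist A Q yb z - rdist A P ya z) * (z - m)))
      = -((rdist A Q yb z - rdist A P ya z) ^ 2 * (rdist A P ya z + rdist A Q yb z)) := by
        linear_combination (rdist A Q yb z - rdist A P ya z) * hsq
    _ ≤ 0 := neg_nonpos.mpr (mul_nonneg (sq_nonneg _)
        (add_nonneg (rdist_nonneg A P ya z) (rdist_nonneg A Q yb z)))

theorem exists_sign_change_phaseNumerDeriv (hA : 0 < A) (hy : ya ≠ yb) :
    ∃ m, (∀ z, phaseNumerDeriv A P Q ya yb z * (z - m) ≤ 0) ∨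
      ∀ z, 0 ≤ phaseNumerDeriv A P Q ya yb z * (z - m) := by
  obtain ⟨m, hm⟩ := exists_sign_change_rdist_sub_rdist (P := P) (Q := Q) hA hy
  have hK : ∀ z, 0 ≤ 1 - A * (z - ya) * (z - yb) / (rdist A P ya z * rdist A Q yb z) :=
    fun z => sub_nonneg.mpr (div_le_one_of_le₀ (mul_le_rdist_mul_rdist hA.le Q ya yb z)
      (mul_nonneg (rdist_nonneg _ _ _ _) (rdist_nonneg _ _ _ _)))
  have hfactor : ∀ z, phaseNumerDeriv A P Q ya yb z * (z - m) =
      (1 - A * (z - ya) * (z - yb) / (rdist A P ya z * rdist A Q yb z)) *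
        ((rdist A Q yb z - rdist A P ya z) * (z - m)) := fun z => by
    rw [phaseNumerDeriv]; ring
  refine ⟨m, (lt_or_gt_of_ne hy).imp (fun h z => ?_) (fun h z => ?_)⟩ <;> rw [hfactor]
  · exact mul_nonpos_of_nonneg_of_nonpos (hK z) (nonpos_of_mul_nonpos_right (hm z) (sub_pos.mpr h))
  · exact mul_nonneg (hK z) (nonneg_of_mul_nonpos_right (hm z) (sub_neg.mpr h))

theorem exists_sign_change_deriv_div_phaseNumer (hA : 0 < A) (hy : ya ≠ yb) {c : ℝ}
    (hc : 0 ≤ c) : ∃ m,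
      (∀ z, 0 ≤ -(c / phaseNumer A P Q ya yb z ^ 2) * phaseNumerDeriv A P Q ya yb z * (z - m)) ∨
      ∀ z, -(c / phaseNumer A P Q ya yb z ^ 2) * phaseNumerDeriv A P Q ya yb z * (z - m) ≤ 0 := by
  obtain ⟨m, hm⟩ := exists_sign_change_phaseNumerDeriv (P := P) (Q := Q) hA hy
  have hcN : ∀ z, -(c / phaseNumer A P Q ya yb z ^ 2) ≤ 0 := fun z => neg_nonpos.mpr (by positivity)
  refine ⟨m, hm.imp (fun h z => ?_) (fun h z => ?_)⟩ <;> rw [mul_assoc]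
  · exact mul_nonneg_of_nonpos_of_nonpos (hcN z) (h z)
  · exact mul_nonpos_of_nonpos_of_nonneg (hcN z) (h z)

end phaseNumer

theorem norm_integral_exp_phase_le_of_le_abs_phaseNumer {A d D P Q ya yb : ℝ} (hA : 0 < A)
    (hP : P ≠ 0) (hQ : Q ≠ 0) (hy : ya ≠ yb) (hD : 0 < D)
    (hN : ∀ z ∈ Icc (0 : ℝ) 1, D ≤ 2 * |phaseNumer A P Q ya yb z|) :
    ‖∫ z in (0 : ℝ)..1,
        Complex.exp (Complex.I * ((2 * π * (rdist A P ya z - rdist A Q yb z) : ℝ) : ℂ)) /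
          ((rdist A P ya z * rdist A Q yb z / d ^ 2 : ℝ) : ℂ)‖ ≤ 6 * (d ^ 2 / (π * A * D)) := by
  set ra := rdist A P ya
  set rb := rdist A Q yb
  set N := phaseNumer A P Q ya yb
  have hN0 : ∀ z ∈ Icc (0 : ℝ) 1, N z ≠ 0 := fun z hz h => by
    linarith [h ▸ hN z hz, abs_zero (α := ℝ)]
  -- the amplitude `d² / (ra rb)` is `φ' * (c / N)` for the phase `φ = 2π (ra - rb)`
  set c := d ^ 2 / (2 * π * A)
  have hφ : ∀ z ∈ Icc (0 : ℝ) 1, HasDerivAt (fun z => 2 * π * (ra z - rb z))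
      (2 * π * (A * N z / (ra z * rb z))) z := fun z _ =>
    (hasDerivAt_rdist_sub_rdist hA.le hP hQ z).const_mul (2 * π)
  have hu : ∀ z ∈ Icc (0 : ℝ) 1, HasDerivAt (fun z => c / N z)
      (-(c / N z ^ 2) * phaseNumerDeriv A P Q ya yb z) z := fun z hz =>
    ((hasDerivAt_const z c).div (hasDerivAt_phaseNumer hA.le hP hQ z) (hN0 z hz)).congr_deriv
      (by ring)
  have hφ' : ContinuousOn (fun z => 2 * π * (A * N z / (ra z * rb z))) (Icc 0 1) := by
    have hr : ∀ z, ra z * rb z ≠ 0 := fun z =>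
      mul_ne_zero (rdist_pos hA.le hP _ _).ne' (rdist_pos hA.le hQ _ _).ne'
    fun_prop (disch := intros; exact hr _)
  have hu' : ContinuousOn (fun z => -(c / N z ^ 2) * phaseNumerDeriv A P Q ya yb z) (Icc 0 1) :=
    ((continuousOn_const.div ((continuous_phaseNumer A P Q ya yb).pow 2).continuousOn
      fun z hz => pow_ne_zero 2 (hN0 z hz)).neg).mul
      (continuous_phaseNumerDeriv hA.le hP hQ).continuousOn
  obtain ⟨m, hsign⟩ := exists_sign_change_deriv_div_phaseNumer (P := P) (Q := Q) hA hy
    (c := c) (by positivity)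
  have hB : ∀ z ∈ Icc (0 : ℝ) 1, |c / N z| ≤ d ^ 2 / (π * A * D) := fun z hz => by
    rw [abs_div, abs_of_nonneg (by positivity : 0 ≤ c), div_le_iff₀ (abs_pos.mpr (hN0 z hz))]
    calc c = d ^ 2 / (π * A * D) * (D / 2) := by simp only [c]; field_simp
      _ ≤ d ^ 2 / (π * A * D) * |N z| := by gcongr; linarith [hN z hz]
  rw [intervalIntegral.integral_congr (g := fun z =>
    Complex.exp (Complex.I * (2 * π * (ra z - rb z) : ℝ)) *
      ((2 * π * (A * N z / (ra z * rb z)) * (c / N z) : ℝ) : ℂ)) fun z hz => ?_]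
  · exact norm_integral_exp_mul_deriv_mul_le_of_sign_change zero_le_one hφ hu hφ' hu'
      (hsign.imp (fun h z _ => h z) (fun h z _ => h z)) hB
  have := hN0 z (uIcc_of_le (zero_le_one (α := ℝ)) ▸ hz)
  simp only [div_eq_mul_inv, ← Complex.ofReal_inv, c]
  congr 3
  field_simp

theorem norm_integral_exp_phase_le {A d P Q ya yb : ℝ} (hA : 0 < A) (hd : 0 < d)
    (hAd : A ≤ d ^ 2) (hP : d ≤ P) (hQ : d ≤ Q) (hya : ya ∈ Icc 0 1) (hyb : yb ∈ Icc 0 1)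
    (hlt : |Q - P| < d * |yb - ya|) :
    ‖∫ z in (0 : ℝ)..1,
        Complex.exp (Complex.I * ((2 * π * (rdist A P ya z - rdist A Q yb z) : ℝ) : ℂ)) /
          ((rdist A P ya z * rdist A Q yb z / d ^ 2 : ℝ) : ℂ)‖ ≤
      6 * (d ^ 2 / (π * A * (d * |yb - ya| - |Q - P|))) := by
  have hy : ya ≠ yb := by
    rintro rfl
    simp only [sub_self, abs_zero, mul_zero] at hlt
    linarith [abs_nonneg (Q - P)]
  exact norm_integral_exp_phase_le_of_le_abs_phaseNumer hA (hd.trans_le hP).ne'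
    (hd.trans_le hQ).ne' hy (sub_pos.mpr hlt)
    fun z hz => sub_abs_le_two_mul_abs_phaseNumer hA.le hd.le hAd hP hQ hya hyb hz

theorem norm_integral_exp_gab_div_Gab_le {Ac d xa xb ya yb w : ℝ} (hAc : 0 < Ac) (hd : √Ac ≤ d)
    (hxa : 0 ≤ xa) (hxb : 0 ≤ xb) (hw : 0 ≤ w) (hya : ya ∈ Icc 0 1) (hyb : yb ∈ Icc 0 1)
    (hlt : √Ac / d * |xb - xa| < |yb - ya|) :
    ‖∫ z in (0 : ℝ)..1,
        Complex.exp (Complex.I * ((2 * π * gab Ac d xa xb ya yb w z : ℝ) : ℂ)) /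
          ((Gab Ac d xa xb ya yb w z : ℝ) : ℂ)‖ ≤
      6 / π * (d / Ac) / (|yb - ya| - √Ac / d * |xb - xa|) := by
  have hd0 : 0 < d := (sqrt_pos.mpr hAc).trans_le hd
  have hAd : Ac ≤ d ^ 2 := by
    simpa [sq_sqrt hAc.le] using pow_le_pow_left₀ (sqrt_nonneg Ac) hd 2
  set P := d + √Ac * (xa + w)
  set Q := d + √Ac * (xb + w)
  have hQP : |Q - P| = √Ac * |xb - xa| := by
    rw [show Q - P = √Ac * (xb - xa) by ring, abs_mul, abs_of_nonneg (sqrt_nonneg _)]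
  have hlt' : |Q - P| < d * |yb - ya| := by
    calc |Q - P| = d * (√Ac / d * |xb - xa|) := by rw [hQP]; field_simp
      _ < d * |yb - ya| := by gcongr
  have hGab : ∀ z, Gab Ac d xa xb ya yb w z = rdist Ac P ya z * rdist Ac Q yb z / d ^ 2 :=
    fun z => by simp only [Gab, rdist]; ring
  have hgab : ∀ z, gab Ac d xa xb ya yb w z = rdist Ac P ya z - rdist Ac Q yb z := fun z => rfl
  simp only [hgab, hGab]
  refine (norm_integral_exp_phase_le hAc hd0 hAd (le_add_of_nonneg_right (by positivity))
    (le_add_of_nonneg_right (by positivity)) hya hyb hlt').trans_eq ?_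
  rw [hQP]
  field_simp

theorem stmt_17 :
    ∃ K₈ : ℝ, 0 < K₈ ∧
      ∀ Ac d : ℝ, 1 ≤ Ac → Real.sqrt Ac ≤ d → d ≤ Ac →
      ∀ xa ∈ Set.Icc (0:ℝ) 1, ∀ xb ∈ Set.Icc (0:ℝ) 1,
      ∀ ya ∈ Set.Icc (0:ℝ) 1, ∀ yb ∈ Set.Icc (0:ℝ) 1,
      Real.sqrt Ac / d * |xb - xa| < |yb - ya| →
        ‖(∫ w in (0:ℝ)..1, ∫ z in (0:ℝ)..1,
            Complex.exp (Complex.I * ((2 * π * gab Ac d xa xb ya yb w z : ℝ) : ℂ)) /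
              ((Gab Ac d xa xb ya yb w z : ℝ) : ℂ))‖
          ≤ K₈ * (d / Ac) / (|yb - ya| - Real.sqrt Ac / d * |xb - xa|) := by
  refine ⟨6 / π, by positivity, fun Ac d hAc hd _ xa hxa xb hxb ya hya yb hyb hlt => ?_⟩
  have hbound : ∀ w ∈ uIoc (0 : ℝ) 1, ‖∫ z in (0 : ℝ)..1,
      Complex.exp (Complex.I * ((2 * π * gab Ac d xa xb ya yb w z : ℝ) : ℂ)) /
        ((Gab Ac d xa xb ya yb w z : ℝ) : ℂ)‖ ≤
      6 / π * (d / Ac) / (|yb - ya| - √Ac / d * |xb - xa|) := fun w hw =>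
    norm_integral_exp_gab_div_Gab_le (by linarith) hd hxa.1 hxb.1
      (uIoc_of_le (zero_le_one (α := ℝ)) ▸ hw).1.le hya hyb hlt
  simpa using intervalIntegral.norm_integral_le_of_norm_le_const hbound
end

section
/- There exists a constant K > 0 such that for every c ≥ 0 and every ε with 0 < ε < 1, ∫_{U₁(ε)} ( |y_b − y_a| − c·|x_b − x_a| )^{−1} dx_a dx_b dy_a dy_b ≤ K · (1 + log(1/ε)), where U₁(ε) = { (x_a, x_b, y_a, y_b) ∈ [0,1]⁴ : |y_b − y_a| − c·|x_b − x_a| ≥ ε }. -/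
/-!
Fix `(x_a, x_b, y_a)` in the cube and put `A = c·|x_b − x_a| ≥ 0`. The `y_b`-integral splits into
the parts `y_b ≥ y_a + A + ε` and `y_b ≤ y_a − A − ε`; after translating (resp. reflecting) `y_b`,
each becomes `∫_ε^L dx/x = log (L/ε)` with `L ≤ 1`. So the inner integral is at most
`2 log (1/ε)`, and Tonelli over the remaining unit cube gives the bound with `K = 2`.
-/

open Real Set MeasureTheory

/-- The domain `U₁(ε)`: quadruples `(x_a, x_b, y_a, y_b)` in the unit cube with
`|y_b − y_a| − c·|x_b − x_a| ≥ ε`. -/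
def U1 (c ε : ℝ) : Set (ℝ × ℝ × ℝ × ℝ) :=
  {p | p.1 ∈ Set.Icc (0:ℝ) 1 ∧ p.2.1 ∈ Set.Icc (0:ℝ) 1 ∧ p.2.2.1 ∈ Set.Icc (0:ℝ) 1 ∧
       p.2.2.2 ∈ Set.Icc (0:ℝ) 1 ∧ ε ≤ |p.2.2.2 - p.2.2.1| - c * |p.2.1 - p.1|}

open scoped ENNReal

theorem lintegral_prod_le_of_forall_mem {α β : Type*} [MeasurableSpace α] [MeasurableSpace β]
    {μ : Measure α} {ν : Measure β} {f : α × β → ℝ≥0∞} {s : Set α} (hs : MeasurableSet s)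
    {C : ℝ≥0∞} (hf : ∀ x ∉ s, ∀ y, f (x, y) = 0) (hC : ∀ x ∈ s, ∫⁻ y, f (x, y) ∂ν ≤ C) :
    ∫⁻ z, f z ∂μ.prod ν ≤ C * μ s := by
  calc ∫⁻ z, f z ∂μ.prod ν ≤ ∫⁻ x, ∫⁻ y, f (x, y) ∂ν ∂μ := lintegral_prod_le f
    _ ≤ ∫⁻ x, s.indicator (fun _ => C) x ∂μ := by
      refine lintegral_mono fun x => ?_
      by_cases hx : x ∈ s
      · simpa [hx] using hC x hx
      · simp [hx, hf x hx]
    _ = C * μ s := lintegral_indicator_const hs C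

theorem lintegral_real_prod_le_of_forall_mem_Icc {β : Type*} [MeasureSpace β]
    {f : ℝ × β → ℝ≥0∞} {C : ℝ≥0∞} (hf : ∀ x ∉ Icc (0 : ℝ) 1, ∀ y, f (x, y) = 0)
    (hC : ∀ x ∈ Icc (0 : ℝ) 1, ∫⁻ y, f (x, y) ≤ C) :
    ∫⁻ z, f z ≤ C := by
  rw [Measure.volume_eq_prod]
  simpa using lintegral_prod_le_of_forall_mem (μ := volume) measurableSet_Icc hf hC

theorem setLIntegral_Icc_ofReal_inv_le_log {ε L : ℝ} (hε : 0 < ε) (hL : L ≤ 1) :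
    ∫⁻ x in Icc ε L, ENNReal.ofReal x⁻¹ ≤ ENNReal.ofReal (log (1 / ε)) := by
  rcases le_or_gt ε L with hεL | hLε
  · have hL₀ : 0 < L := hε.trans_le hεL
    have hint : IntegrableOn (fun x : ℝ => x⁻¹) (Icc ε L) :=
      (continuousOn_inv₀.mono fun x hx => (hε.trans_le hx.1).ne').integrableOn_Icc
    have hnn : 0 ≤ᵐ[volume.restrict (Icc ε L)] fun x : ℝ => x⁻¹ :=
      ae_restrict_of_forall_mem measurableSet_Icc fun x hx => inv_nonneg.2 (hε.le.trans hx.1)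
    rw [← ofReal_integral_eq_lintegral_ofReal hint hnn, integral_Icc_eq_integral_Ioc,
      ← intervalIntegral.integral_of_le hεL, integral_inv_of_pos hε hL₀]
    gcongr
  · simp [Icc_eq_empty_of_lt hLε]

theorem setLIntegral_ofReal_inv_abs_sub_sub_le {u A ε : ℝ} (hu : u ∈ Icc (0 : ℝ) 1) (hA : 0 ≤ A)
    (hε : 0 < ε) :
    ∫⁻ d in {d | d ∈ Icc (0 : ℝ) 1 ∧ ε ≤ |d - u| - A}, ENNReal.ofReal (|d - u| - A)⁻¹
      ≤ 2 * ENNReal.ofReal (log (1 / ε)) := by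
  set f : ℝ → ℝ≥0∞ := fun x => ENNReal.ofReal x⁻¹
  set R := (· - (u + A)) ⁻¹' Icc ε (1 - (u + A))
  set L := ((u - A) - ·) ⁻¹' Icc ε (u - A)
  have hRL : {d | d ∈ Icc (0 : ℝ) 1 ∧ ε ≤ |d - u| - A} ⊆ R ∪ L := by
    rintro d ⟨⟨hd₀, hd₁⟩, hdε⟩
    rcases le_total u d with hud | hdu
    · rw [abs_of_nonneg (sub_nonneg.2 hud)] at hdε
      left; constructor <;> linarith
    · rw [abs_of_nonpos (sub_nonpos.2 hdu)] at hdε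
      right; constructor <;> linarith
  have hR : ∫⁻ d in R, ENNReal.ofReal (|d - u| - A)⁻¹ = ∫⁻ x in Icc ε (1 - (u + A)), f x := by
    rw [← (measurePreserving_sub_right volume (u + A)).setLIntegral_comp_preimage
      measurableSet_Icc (by fun_prop)]
    refine setLIntegral_congr_fun (measurableSet_Icc.preimage (by fun_prop)) fun d hd => ?_
    have : 0 ≤ d - u := by linarith [hd.1]
    simp only [f, abs_of_nonneg this]; ring_nf
  have hL : ∫⁻ d in L, ENNReal.ofReal (|d - u| - A)⁻¹ = ∫⁻ x in Icc ε (u - A), f x := by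
    rw [← (Measure.measurePreserving_sub_left volume (u - A)).setLIntegral_comp_preimage
      measurableSet_Icc (by fun_prop)]
    refine setLIntegral_congr_fun (measurableSet_Icc.preimage (by fun_prop)) fun d hd => ?_
    have : d - u ≤ 0 := by linarith [hd.1]
    simp only [f, abs_of_nonpos this]; ring_nf
  calc _ ≤ ∫⁻ d in R ∪ L, ENNReal.ofReal (|d - u| - A)⁻¹ := lintegral_mono_set hRL
    _ ≤ (∫⁻ d in R, ENNReal.ofReal (|d - u| - A)⁻¹) +
          ∫⁻ d in L, ENNReal.ofReal (|d - u| - A)⁻¹ := lintegral_union_le _ _ _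
    _ ≤ ENNReal.ofReal (log (1 / ε)) + ENNReal.ofReal (log (1 / ε)) := by
      rw [hR, hL]
      gcongr <;> apply setLIntegral_Icc_ofReal_inv_le_log hε <;> linarith [hu.1, hu.2]
    _ = 2 * ENNReal.ofReal (log (1 / ε)) := (two_mul _).symm

theorem measurableSet_U1 (c ε : ℝ) : MeasurableSet (U1 c ε) := by
  unfold U1; measurability

theorem setLIntegral_U1_le {c ε : ℝ} (hc : 0 ≤ c) (hε : 0 < ε) :
    ∫⁻ p in U1 c ε, ENNReal.ofReal (|p.2.2.2 - p.2.2.1| - c * |p.2.1 - p.1|)⁻¹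
      ≤ 2 * ENNReal.ofReal (log (1 / ε)) := by
  rw [← lintegral_indicator (measurableSet_U1 c ε)]
  refine lintegral_real_prod_le_of_forall_mem_Icc
    (fun a ha _ => indicator_of_notMem (fun h => ha h.1) _) fun a ha =>
    lintegral_real_prod_le_of_forall_mem_Icc
    (fun b hb _ => indicator_of_notMem (fun h => hb h.2.1) _) fun b hb =>
    lintegral_real_prod_le_of_forall_mem_Icc
    (fun u hu _ => indicator_of_notMem (fun h => hu h.2.2.1) _) fun u hu => ?_
  refine (lintegral_congr fun d => ?_).trans_le ((lintegral_indicator_le _ _).trans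
    (setLIntegral_ofReal_inv_abs_sub_sub_le hu (by positivity : 0 ≤ c * |b - a|) hε))
  simp only [indicator_apply, U1, mem_ofPred_eq, ha, hb, hu, true_and]

theorem stmt_19 :
    ∃ K : ℝ, 0 < K ∧ ∀ c : ℝ, 0 ≤ c → ∀ ε : ℝ, 0 < ε → ε < 1 →
      (∫ p in U1 c ε, (|p.2.2.2 - p.2.2.1| - c * |p.2.1 - p.1|)⁻¹)
        ≤ K * (1 + Real.log (1 / ε)) := by
  refine ⟨2, two_pos, fun c hc ε hε hε1 => ?_⟩
  have hlog : 0 ≤ log (1 / ε) := log_nonneg (one_le_one_div hε hε1.le)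
  have hnn : 0 ≤ᵐ[volume.restrict (U1 c ε)]
      fun p => (|p.2.2.2 - p.2.2.1| - c * |p.2.1 - p.1|)⁻¹ :=
    ae_restrict_of_forall_mem (measurableSet_U1 c ε) fun p hp =>
      inv_nonneg.2 (hε.le.trans hp.2.2.2.2)
  rw [integral_eq_lintegral_of_nonneg_ae hnn (by fun_prop)]
  calc _ ≤ (2 * ENNReal.ofReal (log (1 / ε))).toReal :=
        ENNReal.toReal_mono (by finiteness) (setLIntegral_U1_le hc hε)
    _ = 2 * log (1 / ε) := by
      rw [ENNReal.toReal_mul, ENNReal.toReal_ofReal hlog, ENNReal.toReal_ofNat]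
    _ ≤ 2 * (1 + log (1 / ε)) := by linarith
end
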